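/- arXiv:2108.00424 — 5 statements merged into one kernel-verified Lean document; each statement's English description precedes it below -/
import Mathlib

section
/- Let Ñ⁺ = { μ ∈ M₂(ℝ) : μ symmetric, det μ = 0, trace μ > 0 }, let F₁(Ñ⁺) be the set of functions f̃ : Ñ⁺ → ℝ with f̃(tμ) = t f̃(μ) for all t > 0 and μ ∈ Ñ⁺, and let F₂(I) be the set of functions ψ : ℝ² \ {0} → ℝ which are homogeneous of degree 2 under all nonzero real scalings, i.e. ψ(qσ) = q² ψ(σ) for all q ∈ ℝ \ {0} and σ ∈ ℝ² \ {0}. Then the map sending f̃ to the function ψ(σ) = f̃(σᵀσ) is a bijection from F₁(Ñ⁺) onto F₂(I). -/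
open Matrix

noncomputable section

/-- The realized future null cone
`Ñ⁺ = {μ ∈ M₂(ℝ) : μ symmetric, det μ = 0, trace μ > 0}`. -/
def Ntilde : Set (Matrix (Fin 2) (Fin 2) ℝ) :=
  {μ | μ.IsSymm ∧ μ.det = 0 ∧ 0 < μ.trace}

/-- The outer product `σᵀσ`. -/
def outer (σ : Fin 2 → ℝ) : Matrix (Fin 2) (Fin 2) ℝ :=
  Matrix.of fun i j => σ i * σ j

lemma outer_mem {σ : Fin 2 → ℝ} (hσ : σ ≠ 0) : outer σ ∈ Ntilde := by
  have h : σ 0 ≠ 0 ∨ σ 1 ≠ 0 := by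
    by_contra h; push_neg at h
    exact hσ (funext fun i => by fin_cases i <;> simp [h.1, h.2])
  refine ⟨?_, ?_, ?_⟩
  · ext i j; simp [outer, Matrix.transpose_apply, mul_comm]
  · simp [outer, Matrix.det_fin_two]; ring
  · have htr : (outer σ).trace = σ 0 * σ 0 + σ 1 * σ 1 := by
      simp [outer, Matrix.trace_fin_two]
    rw [htr]
    rcases h with h | h
    · exact add_pos_of_pos_of_nonneg (mul_self_pos.mpr h) (mul_self_nonneg _)
    · exact add_pos_of_nonneg_of_pos (mul_self_nonneg _) (mul_self_pos.mpr h)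

lemma smul_mem_Ntilde {t : ℝ} (ht : 0 < t) {μ : Matrix (Fin 2) (Fin 2) ℝ}
    (hμ : μ ∈ Ntilde) : t • μ ∈ Ntilde := by
  obtain ⟨h1, h2, h3⟩ := hμ
  refine ⟨?_, ?_, ?_⟩
  · rw [Matrix.IsSymm, Matrix.transpose_smul, h1]
  · rw [Matrix.det_smul, h2, mul_zero]
  · rw [Matrix.trace_smul, smul_eq_mul]
    exact mul_pos ht h3

/-- `F₁(Ñ⁺)`: functions `f̃ : Ñ⁺ → ℝ` with `f̃(tμ) = t f̃(μ)` for all `t > 0`. -/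
def Homog1 (f : Ntilde → ℝ) : Prop :=
  ∀ (t : ℝ) (ht : 0 < t) (μ : Ntilde), f ⟨t • μ.1, smul_mem_Ntilde ht μ.2⟩ = t * f μ

/-- `F₂(I)`: functions `ψ : ℝ² \ {0} → ℝ` with `ψ(qσ) = q² ψ(σ)` for all `q ≠ 0`. -/
def Homog2 (ψ : {σ : Fin 2 → ℝ // σ ≠ 0} → ℝ) : Prop :=
  ∀ (q : ℝ) (hq : q ≠ 0) (σ : {σ : Fin 2 → ℝ // σ ≠ 0}),
    ψ ⟨q • σ.1, smul_ne_zero hq σ.2⟩ = q^2 * ψ σ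

/-! Every `μ ∈ Ñ⁺` is `σᵀσ` for some `σ ≠ 0`, unique up to sign; so `f̃ ↦ f̃ ∘ (σ ↦ σᵀσ)` is
injective, and a `ψ ∈ F₂(I)`, being even, descends to `Ñ⁺` along `σ ↦ σᵀσ`. Degree-1
homogeneity of the descended function under `t > 0` is degree-2 homogeneity of `ψ` under `√t`. -/

lemma outer_smul (r : ℝ) (σ : Fin 2 → ℝ) : outer (r • σ) = r ^ 2 • outer σ := by
  ext i j
  simp only [outer, of_apply, Pi.smul_apply, Matrix.smul_apply, smul_eq_mul]
  ring

lemma exists_mul_self_eq_of_mul_eq_sq {a b c : ℝ} (ha : 0 ≤ a) (hc : 0 ≤ c) (h : a * c = b ^ 2) :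
    ∃ x y : ℝ, x * x = a ∧ x * y = b ∧ y * y = c := by
  -- `√a · √c = √(b²) = |b|`, so the sign of `b` goes on the second factor.
  have hsqrt : √a * √c = |b| := by rw [← Real.sqrt_mul ha, h, Real.sqrt_sq_eq_abs]
  refine ⟨√a, if 0 ≤ b then √c else -√c, Real.mul_self_sqrt ha, ?_, ?_⟩
  · split_ifs with hb
    · rw [hsqrt, abs_of_nonneg hb]
    · rw [mul_neg, hsqrt, abs_of_neg (not_le.mp hb), neg_neg]
  · split_ifs <;> simp [Real.mul_self_sqrt hc]

lemma exists_outer_eq {μ : Matrix (Fin 2) (Fin 2) ℝ} (hμ : μ ∈ Ntilde) : ∃ σ, outer σ = μ := by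
  obtain ⟨hsymm, hdet, htr⟩ := hμ
  have hμ10 : μ 1 0 = μ 0 1 := hsymm.apply 0 1
  rw [det_fin_two, hμ10] at hdet
  rw [trace_fin_two] at htr
  have ha : 0 ≤ μ 0 0 := by nlinarith [sq_nonneg (μ 0 1)]
  have hc : 0 ≤ μ 1 1 := by nlinarith [sq_nonneg (μ 0 1)]
  obtain ⟨x, y, hxx, hxy, hyy⟩ :=
    exists_mul_self_eq_of_mul_eq_sq (b := μ 0 1) ha hc (by linear_combination hdet)
  refine ⟨![x, y], ?_⟩
  ext i j
  fin_cases i <;> fin_cases j <;> simp [outer, hxx, hxy, hyy, hμ10, mul_comm y x]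

lemma eq_or_eq_neg_of_mul_self_eq {ι R : Type*} [CommRing R] [IsDomain R] {σ τ : ι → R}
    (h : ∀ i j, σ i * σ j = τ i * τ j) : τ = σ ∨ τ = -σ := by
  by_cases hσ : σ = 0
  · exact Or.inl (funext fun i => by simpa [hσ] using (h i i).symm)
  obtain ⟨k, hk⟩ := Function.ne_iff.mp hσ
  rcases mul_self_eq_mul_self_iff.mp (h k k).symm with hτk | hτk
  · exact Or.inl (funext fun j => mul_left_cancel₀ hk (by rw [h k j, hτk]))
  · refine Or.inr (funext fun j => mul_left_cancel₀ hk ?_)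
    rw [Pi.neg_apply, mul_neg, h k j, hτk, neg_mul, neg_neg]

def outerMap (σ : {σ : Fin 2 → ℝ // σ ≠ 0}) : Ntilde :=
  ⟨outer σ.1, outer_mem σ.2⟩

lemma outerMap_surjective : Function.Surjective outerMap := by
  rintro ⟨μ, hμ⟩
  obtain ⟨σ, rfl⟩ := exists_outer_eq hμ
  have hσ : σ ≠ 0 := by
    rintro rfl
    simpa [outer, trace_fin_two] using hμ.2.2
  exact ⟨⟨σ, hσ⟩, rfl⟩

lemma outerMap_smul {q t : ℝ} (hq : q ≠ 0) (ht : 0 < t) (hqt : q ^ 2 = t)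
    (σ : {σ : Fin 2 → ℝ // σ ≠ 0}) :
    outerMap ⟨q • σ.1, smul_ne_zero hq σ.2⟩ =
      ⟨t • (outerMap σ).1, smul_mem_Ntilde ht (outerMap σ).2⟩ :=
  Subtype.ext (hqt ▸ outer_smul q σ.1)

lemma Homog2.factorsThrough_outerMap {ψ : {σ : Fin 2 → ℝ // σ ≠ 0} → ℝ} (hψ : Homog2 ψ) :
    ψ.FactorsThrough outerMap := by
  intro σ τ hστ
  have hentries (i j : Fin 2) : σ.1 i * σ.1 j = τ.1 i * τ.1 j :=
    congrFun (congrFun (congrArg Subtype.val hστ) i) j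
  rcases eq_or_eq_neg_of_mul_self_eq hentries with h | h
  · rw [Subtype.ext h]
  · have hτ : τ = ⟨(-1 : ℝ) • σ.1, smul_ne_zero (neg_ne_zero.mpr one_ne_zero) σ.2⟩ :=
      Subtype.ext (by simp [h])
    rw [hτ, hψ _ (neg_ne_zero.mpr one_ne_zero), neg_one_sq, one_mul]

lemma Homog1.comp_outerMap {f : Ntilde → ℝ} (hf : Homog1 f) : Homog2 (f ∘ outerMap) :=
  fun q hq σ =>
    (congrArg f (outerMap_smul hq (by positivity) rfl σ)).trans (hf _ (by positivity) _)

lemma Homog2.homog1_extend_outerMap {ψ : {σ : Fin 2 → ℝ // σ ≠ 0} → ℝ} (hψ : Homog2 ψ) :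
    Homog1 (Function.extend outerMap ψ 0) := by
  intro t ht μ
  obtain ⟨σ, rfl⟩ := outerMap_surjective μ
  have hst : √t ≠ 0 := (Real.sqrt_pos.mpr ht).ne'
  rw [← outerMap_smul hst ht (Real.sq_sqrt ht.le) σ, hψ.factorsThrough_outerMap.extend_apply,
    hψ.factorsThrough_outerMap.extend_apply, hψ _ hst, Real.sq_sqrt ht.le]

/-- The map sending `f̃ ∈ F₁(Ñ⁺)` to `ψ(σ) = f̃(σᵀσ)` is a bijection from `F₁(Ñ⁺)`
onto `F₂(I)`. -/
theorem homog1_bijOn_homog2 :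
    Set.BijOn
      (fun (f : Ntilde → ℝ) => fun (σ : {σ : Fin 2 → ℝ // σ ≠ 0}) =>
        f ⟨outer σ.1, outer_mem σ.2⟩)
      {f | Homog1 f} {ψ | Homog2 ψ} :=
  ⟨fun _ hf => hf.comp_outerMap, outerMap_surjective.injective_comp_right.injOn,
    fun ψ hψ => ⟨Function.extend outerMap ψ 0, hψ.homog1_extend_outerMap,
      funext (hψ.factorsThrough_outerMap.extend_apply 0)⟩⟩
end
end

section
/- Let g ∈ SL(2,ℝ) and let β : ℝ → ℝ be measurable. Then, with values in [0,∞], ∫ κ_g(ρ)^{-4} β(ρ·g)² dλ(ρ) = ∫ κ_{g⁻¹}(ξ)³ β(ξ)² dλ(ξ); that is, the squared L²(λ)-norm of the dual action T′(g)β equals ∫ κ_{g⁻¹}³ β² dλ. In particular, for λ-almost every ξ one has κ_{g⁻¹}(ξ) · κ_g(ξ·g⁻¹) = 1. -/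
open MeasureTheory Matrix

noncomputable section

/-- `SL(2,ℝ)`, the group of real 2×2 matrices of determinant 1. -/
abbrev SL2 := Matrix.SpecialLinearGroup (Fin 2) ℝ

/-- The Cauchy probability measure on `ℝ`, with density `ρ ↦ 1/(π(1+ρ²))` with
respect to Lebesgue measure. -/
def cauchyM : Measure ℝ :=
  volume.withDensity fun ρ => ENNReal.ofReal (1 / (Real.pi * (1 + ρ ^ 2)))

/-- The Möbius right action `ρ·g = (aρ+c)/(bρ+d)` of `g = [[a,b],[c,d]] ∈ SL(2,ℝ)`
on `ℝ` (here `a = g 0 0`, `b = g 0 1`, `c = g 1 0`, `d = g 1 1`). -/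
def mob (g : SL2) (ρ : ℝ) : ℝ :=
  (g.1 0 0 * ρ + g.1 1 0) / (g.1 0 1 * ρ + g.1 1 1)

/-- The factor `κ_g(ρ) = ((aρ+c)² + (bρ+d)²)/(ρ²+1)`. -/
def kappa (g : SL2) (ρ : ℝ) : ℝ :=
  ((g.1 0 0 * ρ + g.1 1 0) ^ 2 + (g.1 0 1 * ρ + g.1 1 1) ^ 2) / (ρ ^ 2 + 1)


/-!
Writing `(ρ, 1) g = (mobNum g ρ, mobDen g ρ)`, off the single pole of `g` the row vector
`(ρ·g, 1)` is `(ρ, 1) g / mobDen g ρ`; hence `ρ·(gh) = (ρ·g)·h` and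
`κ_{gh}(ρ) = κ_g(ρ) κ_h(ρ·g)`, and `h = g⁻¹` gives the almost-everywhere identity.
The Cauchy measure is quasi-invariant: `d(ρ·g)/dρ = mobDen g ρ⁻²` and
`1 + (ρ·g)² = κ_g(ρ) (1 + ρ²) / mobDen g ρ²`, so the substitution `ρ ↦ ρ·g` turns `dλ` into
`κ_g⁻¹ dλ`. Substituting `ρ = ξ·g⁻¹` in the left integral and using
`κ_g(ξ·g⁻¹) = κ_{g⁻¹}(ξ)⁻¹` leaves the weight `κ_{g⁻¹}⁴ κ_{g⁻¹}⁻¹ = κ_{g⁻¹}³`.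
-/

def mobNum (g : SL2) (ρ : ℝ) : ℝ := g.1 0 0 * ρ + g.1 1 0

def mobDen (g : SL2) (ρ : ℝ) : ℝ := g.1 0 1 * ρ + g.1 1 1

def cauchyDensity (ρ : ℝ) : ℝ := 1 / (Real.pi * (1 + ρ ^ 2))

section Algebra

variable (g h : SL2) {ρ : ℝ}

lemma mob_eq_div (ρ : ℝ) : mob g ρ = mobNum g ρ / mobDen g ρ := rfl

lemma kappa_eq_div (ρ : ℝ) :
    kappa g ρ = (mobNum g ρ ^ 2 + mobDen g ρ ^ 2) / (ρ ^ 2 + 1) := rfl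

lemma mobNum_mul (ρ : ℝ) :
    mobNum (g * h) ρ = mobNum g ρ * h.1 0 0 + mobDen g ρ * h.1 1 0 := by
  simp only [mobNum, mobDen, show (g * h).1 = g.1 * h.1 from rfl, mul_apply, Fin.sum_univ_two]
  ring

lemma mobDen_mul (ρ : ℝ) :
    mobDen (g * h) ρ = mobNum g ρ * h.1 0 1 + mobDen g ρ * h.1 1 1 := by
  simp only [mobNum, mobDen, show (g * h).1 = g.1 * h.1 from rfl, mul_apply, Fin.sum_univ_two]
  ring

lemma mobNum_one (ρ : ℝ) : mobNum 1 ρ = ρ := by simp [mobNum]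

lemma mobDen_one (ρ : ℝ) : mobDen 1 ρ = 1 := by simp [mobDen]

lemma mul_mobDen_sub_mul_mobNum (ρ : ℝ) :
    g.1 0 0 * mobDen g ρ - g.1 0 1 * mobNum g ρ = 1 := by
  have := g.2
  rw [det_fin_two] at this
  simp only [mobNum, mobDen]
  linear_combination this

lemma mobNum_sq_add_mobDen_sq_pos (ρ : ℝ) : 0 < mobNum g ρ ^ 2 + mobDen g ρ ^ 2 := by
  by_contra! hle
  have hnum : mobNum g ρ = 0 := by nlinarith [sq_nonneg (mobNum g ρ), sq_nonneg (mobDen g ρ)]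
  have hden : mobDen g ρ = 0 := by nlinarith [sq_nonneg (mobNum g ρ), sq_nonneg (mobDen g ρ)]
  simpa [hnum, hden] using mul_mobDen_sub_mul_mobNum g ρ

lemma kappa_pos (ρ : ℝ) : 0 < kappa g ρ := by
  rw [kappa_eq_div]
  exact div_pos (mobNum_sq_add_mobDen_sq_pos g ρ) (by positivity)

lemma mobNum_mul_of_ne (hρ : mobDen g ρ ≠ 0) :
    mobNum (g * h) ρ = mobDen g ρ * mobNum h (mob g ρ) := by
  rw [mobNum_mul, mobNum.eq_1 h, mob_eq_div, mul_add, mul_left_comm, mul_div_cancel₀ _ hρ]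
  ring

lemma mobDen_mul_of_ne (hρ : mobDen g ρ ≠ 0) :
    mobDen (g * h) ρ = mobDen g ρ * mobDen h (mob g ρ) := by
  rw [mobDen_mul, mobDen.eq_1 h, mob_eq_div, mul_add, mul_left_comm, mul_div_cancel₀ _ hρ]
  ring

lemma mob_mul (hρ : mobDen g ρ ≠ 0) : mob (g * h) ρ = mob h (mob g ρ) := by
  rw [mob_eq_div, mob_eq_div h, mobNum_mul_of_ne g h hρ, mobDen_mul_of_ne g h hρ,
    mul_div_mul_left _ _ hρ]

lemma kappa_mul (hρ : mobDen g ρ ≠ 0) :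
    kappa (g * h) ρ = kappa g ρ * kappa h (mob g ρ) := by
  have hpos := mobNum_sq_add_mobDen_sq_pos g ρ
  have hsq : mob g ρ ^ 2 + 1 = (mobNum g ρ ^ 2 + mobDen g ρ ^ 2) / mobDen g ρ ^ 2 := by
    rw [mob_eq_div]; field_simp
  rw [kappa_eq_div, kappa_eq_div, kappa_eq_div h, mobNum_mul_of_ne g h hρ,
    mobDen_mul_of_ne g h hρ, hsq]
  field_simp

lemma mobDen_mul_mobDen_inv (hρ : mobDen g ρ ≠ 0) :
    mobDen g ρ * mobDen g⁻¹ (mob g ρ) = 1 := by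
  rw [← mobDen_mul_of_ne g g⁻¹ hρ, mul_inv_cancel, mobDen_one]

lemma mob_inv_mob (hρ : mobDen g ρ ≠ 0) : mob g⁻¹ (mob g ρ) = ρ := by
  rw [← mob_mul g g⁻¹ hρ, mul_inv_cancel, mob_eq_div, mobNum_one, mobDen_one, div_one]

lemma kappa_mul_kappa_inv (hρ : mobDen g ρ ≠ 0) : kappa g ρ * kappa g⁻¹ (mob g ρ) = 1 := by
  rw [← kappa_mul g g⁻¹ hρ, mul_inv_cancel, kappa_eq_div, mobNum_one, mobDen_one]
  field_simp

end Algebra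

section Analysis

variable (g : SL2) {ρ : ℝ}

lemma ae_mobDen_ne_zero : ∀ᵐ ρ, mobDen g ρ ≠ 0 := by
  have hb : ∀ ρ, mobDen g ρ = 0 → g.1 0 1 ≠ 0 := fun ρ hρ hb => by
    simpa [hb, hρ] using mul_mobDen_sub_mul_mobNum g ρ
  have hzero : {ρ | mobDen g ρ = 0}.Subsingleton := fun x hx y hy =>
    mul_left_cancel₀ (hb x hx) (by simp only [Set.mem_ofPred_eq, mobDen] at hx hy; linarith)
  simpa [ae_iff] using hzero.measure_zero volume

lemma hasDerivAt_mob (hρ : mobDen g ρ ≠ 0) : HasDerivAt (mob g) (mobDen g ρ ^ 2)⁻¹ ρ := by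
  have hnum : HasDerivAt (mobNum g) (g.1 0 0) ρ := by
    unfold mobNum
    simpa using ((hasDerivAt_id ρ).const_mul (g.1 0 0)).add_const (g.1 1 0)
  have hden : HasDerivAt (mobDen g) (g.1 0 1) ρ := by
    unfold mobDen
    simpa using ((hasDerivAt_id ρ).const_mul (g.1 0 1)).add_const (g.1 1 1)
  refine (hnum.div hden hρ).congr_deriv ?_
  rw [mul_comm (mobNum g ρ), mul_mobDen_sub_mul_mobNum, inv_eq_one_div]

lemma cauchyDensity_mob_mul_inv_mobDen_sq (hρ : mobDen g ρ ≠ 0) :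
    cauchyDensity (mob g ρ) * (mobDen g ρ ^ 2)⁻¹ = cauchyDensity ρ * (kappa g ρ)⁻¹ := by
  have hpos := mobNum_sq_add_mobDen_sq_pos g ρ
  rw [cauchyDensity, cauchyDensity, kappa_eq_div, mob_eq_div]
  field_simp
  ring

lemma lintegral_cauchyM_eq_lintegral_comp_mob (f : ℝ → ENNReal) :
    ∫⁻ ρ, f ρ ∂cauchyM = ∫⁻ ξ, ENNReal.ofReal (kappa g ξ)⁻¹ * f (mob g ξ) ∂cauchyM := by
  set s := {ξ | mobDen g ξ ≠ 0}
  have hs : MeasurableSet s :=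
    (measurableSet_eq_fun (by unfold mobDen; fun_prop) measurable_const).compl
  have himage : ∀ᵐ ρ, ρ ∈ mob g '' s := (ae_mobDen_ne_zero g⁻¹).mono fun ρ hρ => by
    refine ⟨mob g⁻¹ ρ, ?_, by simpa using mob_inv_mob g⁻¹ hρ⟩
    exact right_ne_zero_of_mul_eq_one (by simpa using mobDen_mul_mobDen_inv g⁻¹ hρ)
  have hinj : Set.InjOn (mob g) s := fun x hx y hy hxy => by
    rw [← mob_inv_mob g hx, ← mob_inv_mob g hy, hxy]
  have hw : Measurable fun ρ => ENNReal.ofReal (cauchyDensity ρ) := by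
    unfold cauchyDensity; fun_prop
  have hwfin : ∀ᵐ ρ ∂volume, ENNReal.ofReal (cauchyDensity ρ) < ⊤ :=
    .of_forall fun _ => ENNReal.ofReal_lt_top
  have hpoint : ∀ ξ ∈ s, ENNReal.ofReal |(mobDen g ξ ^ 2)⁻¹| *
      (ENNReal.ofReal (cauchyDensity (mob g ξ)) * f (mob g ξ)) =
      ENNReal.ofReal (cauchyDensity ξ) * (ENNReal.ofReal (kappa g ξ)⁻¹ * f (mob g ξ)) := by
    intro ξ hξ
    have hκ := kappa_pos g ξ
    rw [← mul_assoc, ← mul_assoc, abs_of_nonneg (by positivity),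
      ← ENNReal.ofReal_mul (by positivity),
      ← ENNReal.ofReal_mul (by unfold cauchyDensity; positivity),
      mul_comm _ (cauchyDensity _), cauchyDensity_mob_mul_inv_mobDen_sq g hξ]
  calc ∫⁻ ρ, f ρ ∂cauchyM
      = ∫⁻ ρ, ENNReal.ofReal (cauchyDensity ρ) * f ρ :=
        lintegral_withDensity_eq_lintegral_mul_non_measurable _ hw hwfin f
    _ = ∫⁻ ρ in mob g '' s, ENNReal.ofReal (cauchyDensity ρ) * f ρ := by
        rw [Measure.restrict_eq_self_of_ae_mem himage]
    _ = ∫⁻ ξ in s, ENNReal.ofReal |(mobDen g ξ ^ 2)⁻¹| *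
          (ENNReal.ofReal (cauchyDensity (mob g ξ)) * f (mob g ξ)) :=
        lintegral_image_eq_lintegral_abs_deriv_mul hs
          (fun ξ hξ => (hasDerivAt_mob g hξ).hasDerivWithinAt) hinj _
    _ = ∫⁻ ξ in s, ENNReal.ofReal (cauchyDensity ξ) *
          (ENNReal.ofReal (kappa g ξ)⁻¹ * f (mob g ξ)) := setLIntegral_congr_fun hs hpoint
    _ = ∫⁻ ξ, ENNReal.ofReal (cauchyDensity ξ) *
          (ENNReal.ofReal (kappa g ξ)⁻¹ * f (mob g ξ)) := by
        rw [Measure.restrict_eq_self_of_ae_mem (s := s) (ae_mobDen_ne_zero g)]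
    _ = ∫⁻ ξ, ENNReal.ofReal (kappa g ξ)⁻¹ * f (mob g ξ) ∂cauchyM :=
        (lintegral_withDensity_eq_lintegral_mul_non_measurable _ hw hwfin _).symm

end Analysis

theorem dual_action_norm_sq_general (g : SL2) (β : ℝ → ℝ) :
    (∫⁻ ρ, ENNReal.ofReal ((kappa g ρ ^ 4)⁻¹ * β (mob g ρ) ^ 2) ∂cauchyM
      = ∫⁻ ξ, ENNReal.ofReal (kappa g⁻¹ ξ ^ 3 * β ξ ^ 2) ∂cauchyM) ∧
    (∀ᵐ ξ ∂cauchyM, kappa g⁻¹ ξ * kappa g (mob g⁻¹ ξ) = 1) := by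
  have hden : ∀ᵐ ξ ∂cauchyM, mobDen g⁻¹ ξ ≠ 0 :=
    withDensity_absolutelyContinuous _ _ |>.ae_le (ae_mobDen_ne_zero g⁻¹)
  have hkappa : ∀ᵐ ξ ∂cauchyM, kappa g⁻¹ ξ * kappa g (mob g⁻¹ ξ) = 1 :=
    hden.mono fun ξ hξ => by simpa using kappa_mul_kappa_inv g⁻¹ hξ
  refine ⟨?_, hkappa⟩
  rw [lintegral_cauchyM_eq_lintegral_comp_mob g⁻¹]
  refine lintegral_congr_ae ((hden.and hkappa).mono fun ξ ⟨hξ, hκ⟩ => ?_)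
  have hpos := kappa_pos g⁻¹ ξ
  dsimp only
  rw [show mob g (mob g⁻¹ ξ) = ξ by simpa using mob_inv_mob g⁻¹ hξ,
    eq_inv_of_mul_eq_one_right hκ, ← ENNReal.ofReal_mul (by positivity)]
  congr 1
  field_simp

/-- The squared `L²(λ)`-norm of the dual action `T′(g)β` transforms as
`∫ κ_g(ρ)⁻⁴ β(ρ·g)² dλ(ρ) = ∫ κ_{g⁻¹}(ξ)³ β(ξ)² dλ(ξ)` (with values in `[0,∞]`);
in particular, for λ-almost every `ξ`, `κ_{g⁻¹}(ξ) · κ_g(ξ·g⁻¹) = 1`. -/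
theorem dual_action_norm_sq (g : SL2) (β : ℝ → ℝ) (hβ : Measurable β) :
    (∫⁻ ρ, ENNReal.ofReal ((kappa g ρ ^ 4)⁻¹ * β (mob g ρ) ^ 2) ∂cauchyM
      = ∫⁻ ξ, ENNReal.ofReal (kappa g⁻¹ ξ ^ 3 * β ξ ^ 2) ∂cauchyM) ∧
    (∀ᵐ ξ ∂cauchyM, kappa g⁻¹ ξ * kappa g (mob g⁻¹ ξ) = 1) :=
  dual_action_norm_sq_general g β
end
end

section
/- Let 𝒜 be a real Hilbert space. Then the map sending β ∈ 𝒜 to the character χ_β : 𝒜 → ℂ, χ_β(α) = exp(i⟨β,α⟩), is a bijection from 𝒜 onto the set of all continuous characters of 𝒜, i.e. all continuous functions χ : 𝒜 → ℂ with |χ(α)| = 1 for all α and χ(α₁+α₂) = χ(α₁)χ(α₂) for all α₁, α₂ ∈ 𝒜; moreover this bijection is a group isomorphism from the additive group of 𝒜 onto the character group under pointwise multiplication. -/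
/-!
A character `χ` of `𝒜` is a continuous map into the circle. Since `𝒜` is simply connected and
`t ↦ exp (i t)` is a covering map `ℝ → 𝕊¹`, `χ` lifts to a continuous `f : 𝒜 → ℝ` with
`f 0 = 0`. By uniqueness of lifts, `α ↦ f (α + γ) - f γ` equals `f`, so `f` is additive, hence a
continuous real-linear functional, which by the Riesz representation theorem is `⟨β, ·⟩`.
Uniqueness of lifts also gives injectivity of `β ↦ χ_β`.
-/

open Complex

def circleAddChar {G : Type*} [AddMonoid G] (χ : G → ℂ) (hnorm : ∀ x, ‖χ x‖ = 1)
    (hadd : ∀ x y, χ (x + y) = χ x * χ y) : AddChar G Circle where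
  toFun x := ⟨χ x, mem_sphere_zero_iff_norm.2 (hnorm x)⟩
  map_zero_eq_one' := by
    have hne : χ 0 ≠ 0 := norm_ne_zero_iff.1 (by simp [hnorm])
    have hidem : χ 0 * χ 0 = χ 0 := by rw [← hadd, add_zero]
    exact Subtype.ext ((mul_eq_left₀ hne).1 hidem)
  map_add_eq_mul' x y := Subtype.ext (hadd x y)

theorem AddChar.exists_continuous_addMonoidHom_circleExp_eq {G : Type*} [AddMonoid G]
    [TopologicalSpace G] [ContinuousAdd G] [SimplyConnectedSpace G] [LocallyPathConnectedSpace G]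
    (χ : AddChar G Circle) (hχ : Continuous χ) :
    ∃ f : G →+ ℝ, Continuous f ∧ ∀ x, Circle.exp (f x) = χ x := by
  obtain ⟨F, ⟨hF0, hF⟩, -⟩ :=
    Circle.isCoveringMap_exp.existsUnique_continuousMap_lifts ⟨χ, hχ⟩ 0 0 (by simp)
  replace hF (x : G) : Circle.exp (F x) = χ x := congrFun hF x
  have hF_add (x y : G) : F (x + y) = F x + F y := by
    have hlift : (fun x => F (x + y) - F y) = F :=
      Circle.isCoveringMap_exp.eq_of_comp_eq (by fun_prop) F.continuous
        (funext fun x => by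
          simp only [Function.comp_apply, Circle.exp_sub, hF, AddChar.map_add_eq_mul,
            mul_div_cancel_right])
        0 (by simp [hF0])
    rw [← congrFun hlift x, sub_add_cancel]
  exact ⟨AddMonoidHom.mk' F hF_add, F.continuous, hF⟩

theorem circleExp_inner_injective {E : Type*} [NormedAddCommGroup E] [InnerProductSpace ℝ E] :
    Function.Injective fun (β : E) (α : E) => Circle.exp (inner ℝ β α) := by
  intro β₁ β₂ h
  have hinner : (inner ℝ β₁ · : E → ℝ) = (inner ℝ β₂ ·) :=
    Circle.isCoveringMap_exp.eq_of_comp_eq (by fun_prop) (by fun_prop) h 0 (by simp)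
  exact ext_inner_right ℝ (congrFun hinner)

theorem AddMonoidHom.exists_inner_eq {E : Type*} [NormedAddCommGroup E] [InnerProductSpace ℝ E]
    [CompleteSpace E] (f : E →+ ℝ) (hf : Continuous f) : ∃ β : E, ∀ α, inner ℝ β α = f α :=
  ⟨(InnerProductSpace.toDual ℝ E).symm (f.toRealLinearMap hf),
    fun _ => InnerProductSpace.toDual_symm_apply⟩

/-- For a real Hilbert space `𝒜`, the map `β ↦ χ_β`, `χ_β(α) = exp(i⟨β,α⟩)`, is a
bijection from `𝒜` onto the set of all continuous characters of `𝒜` (continuous maps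
`χ : 𝒜 → ℂ` of unit modulus with `χ(α₁+α₂) = χ(α₁)χ(α₂)`), and it is a group
homomorphism from the additive group of `𝒜` to the character group under pointwise
multiplication. -/
theorem characters_of_real_hilbert_space
    (A : Type*) [NormedAddCommGroup A] [InnerProductSpace ℝ A] [CompleteSpace A] :
    Set.BijOn
      (fun (β : A) => fun (α : A) => Complex.exp (((inner ℝ β α : ℝ) : ℂ) * Complex.I))
      Set.univ
      {χ : A → ℂ | Continuous χ ∧ (∀ α, ‖χ α‖ = 1) ∧
        ∀ α₁ α₂, χ (α₁ + α₂) = χ α₁ * χ α₂} ∧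
    ∀ β₁ β₂ α : A,
      Complex.exp (((inner ℝ (β₁ + β₂) α : ℝ) : ℂ) * Complex.I) =
        Complex.exp (((inner ℝ β₁ α : ℝ) : ℂ) * Complex.I) *
          Complex.exp (((inner ℝ β₂ α : ℝ) : ℂ) * Complex.I) := by
  refine ⟨⟨fun β _ => ⟨by fun_prop, fun α => norm_exp_ofReal_mul_I _, fun α₁ α₂ => ?_⟩,
    fun β₁ _ β₂ _ h => ?_, ?_⟩, fun β₁ β₂ α => ?_⟩
  · dsimp only
    rw [inner_add_right, ofReal_add, add_mul, exp_add]
  · exact circleExp_inner_injective (funext fun α => Subtype.ext (congrFun h α))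
  · rintro χ ⟨hχc, hχnorm, hχadd⟩
    obtain ⟨f, hfc, hf⟩ :=
      (circleAddChar χ hχnorm hχadd).exists_continuous_addMonoidHom_circleExp_eq
        (hχc.subtype_mk _)
    obtain ⟨β, hβ⟩ := f.exists_inner_eq hfc
    exact ⟨β, trivial, funext fun α => by
      simp only [hβ]
      exact congrArg Subtype.val (hf α)⟩
  · rw [inner_add_left, ofReal_add, add_mul, exp_add]
end

section
/- Let (g_n) be a sequence in SL(2,ℝ) with ‖g_n‖ → ∞, where ‖g‖ = (a²+b²+c²+d²)^{1/2}. Then there exists a subsequence (g_{n_p}) such that κ_{g_{n_p}} → ∞ almost uniformly with respect to λ as p → ∞: for every ε > 0 there is a measurable set S ⊆ ℝ with λ(ℝ \ S) ≤ ε such that for every M > 0 there is P with κ_{g_{n_p}}(ρ) ≥ M for all p ≥ P and all ρ ∈ S. -/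
open MeasureTheory Matrix

noncomputable section

/-- The norm `‖g‖ = (a² + b² + c² + d²)^{1/2}` on `SL(2,ℝ)`. -/
def gnorm (g : SL2) : ℝ :=
  Real.sqrt ((g.1 0 0) ^ 2 + (g.1 0 1) ^ 2 + (g.1 1 0) ^ 2 + (g.1 1 1) ^ 2)

/-!
Define `κ_A(ρ) = ((A₀₀ρ + A₁₀)² + (A₀₁ρ + A₁₁)²)/(ρ² + 1)` for every real 2×2 matrix `A`, so
that `κ_g = ‖g‖² κ_{g/‖g‖}` for the Frobenius norm `‖g‖`. By compactness of the unit sphere, a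
subsequence of `g_n/‖g_n‖` converges to some `B ≠ 0`, and `κ_B` vanishes at most at one point
(where `(ρ, 1)` is orthogonal to both columns of `B`). Hence `κ_{g_{n_p}}(ρ) → ∞` for `λ`-almost
every `ρ`, and Egorov's theorem, applied to `arctan ∘ κ_{g_{n_p}} → π/2`, makes the divergence
almost uniform.
-/

open Filter Topology ProbabilityTheory

attribute [local instance] Matrix.frobeniusNormedAddCommGroup Matrix.frobeniusNormedSpace

theorem exists_eventually_forall_le_of_ae_tendsto_atTop {α : Type*} [MeasurableSpace α]
    {μ : Measure α} [IsFiniteMeasure μ] {f : ℕ → α → ℝ} (hf : ∀ n, Measurable (f n))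
    (hlim : ∀ᵐ x ∂μ, Tendsto (fun n => f n x) atTop atTop) {ε : ℝ} (hε : 0 < ε) :
    ∃ S, MeasurableSet S ∧ μ Sᶜ ≤ ENNReal.ofReal ε ∧
      ∀ M, ∀ᶠ n in atTop, ∀ x ∈ S, M ≤ f n x := by
  obtain ⟨t, ht, hμt, hunif⟩ := tendstoUniformlyOn_of_ae_tendsto'
    (g := fun _ => Real.pi / 2) (fun n => (Real.measurable_arctan.comp (hf n)).stronglyMeasurable)
    stronglyMeasurable_const
    (by filter_upwards [hlim] with x hx using
      Real.tendsto_arctan_atTop.mono_right nhdsWithin_le_nhds |>.comp hx) hε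
  refine ⟨tᶜ, ht.compl, by rwa [compl_compl], fun M => ?_⟩
  filter_upwards [Metric.tendstoUniformlyOn_iff.1 hunif _ (sub_pos.2 (Real.arctan_lt_pi_div_two M))]
    with n hn x hx
  have hclose := hn x hx
  rw [Real.dist_eq, abs_lt, Function.comp_apply] at hclose
  exact Real.arctan_strictMono.le_iff_le.1 (by linarith)

theorem cauchyM_eq_cauchyMeasure : cauchyM = cauchyMeasure 0 1 := by
  rw [cauchyMeasure_of_scale_ne_zero _ one_ne_zero, cauchyM]
  congr with ρ
  rw [cauchyPDF_def, cauchyPDFReal_def]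
  congr 1
  push_cast
  field_simp
  ring

instance : IsProbabilityMeasure cauchyM := cauchyM_eq_cauchyMeasure ▸ inferInstance

instance : NullSingletonClass cauchyM := by
  unfold cauchyM
  infer_instance

def kappaMatrix (A : Matrix (Fin 2) (Fin 2) ℝ) (ρ : ℝ) : ℝ :=
  ((A 0 0 * ρ + A 1 0) ^ 2 + (A 0 1 * ρ + A 1 1) ^ 2) / (ρ ^ 2 + 1)

theorem kappa_eq_kappaMatrix (g : SL2) : kappa g = kappaMatrix g.1 := rfl

theorem kappaMatrix_nonneg (A : Matrix (Fin 2) (Fin 2) ℝ) (ρ : ℝ) : 0 ≤ kappaMatrix A ρ := by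
  unfold kappaMatrix
  positivity

theorem kappaMatrix_eq_zero_iff {A : Matrix (Fin 2) (Fin 2) ℝ} {ρ : ℝ} :
    kappaMatrix A ρ = 0 ↔ A 0 0 * ρ + A 1 0 = 0 ∧ A 0 1 * ρ + A 1 1 = 0 := by
  rw [kappaMatrix, div_eq_zero_iff, or_iff_left (by positivity),
    add_eq_zero_iff_of_nonneg (sq_nonneg _) (sq_nonneg _), sq_eq_zero_iff, sq_eq_zero_iff]

theorem kappaMatrix_smul (c : ℝ) (A : Matrix (Fin 2) (Fin 2) ℝ) (ρ : ℝ) :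
    kappaMatrix (c • A) ρ = c ^ 2 * kappaMatrix A ρ := by
  simp only [kappaMatrix, Matrix.smul_apply, smul_eq_mul]
  ring

theorem kappaMatrix_eq_norm_sq_mul (A : Matrix (Fin 2) (Fin 2) ℝ) (ρ : ℝ) :
    kappaMatrix A ρ = ‖A‖ ^ 2 * kappaMatrix (‖A‖⁻¹ • A) ρ := by
  rcases eq_or_ne A 0 with rfl | hA
  · simp [kappaMatrix]
  rw [kappaMatrix_smul, ← mul_assoc, ← mul_pow, mul_inv_cancel₀ (norm_ne_zero_iff.2 hA), one_pow,
    one_mul]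

theorem continuous_kappaMatrix_apply (ρ : ℝ) : Continuous fun A => kappaMatrix A ρ := by
  unfold kappaMatrix
  fun_prop

theorem measurable_kappaMatrix (A : Matrix (Fin 2) (Fin 2) ℝ) : Measurable (kappaMatrix A) := by
  unfold kappaMatrix
  fun_prop

theorem subsingleton_setOf_kappaMatrix_eq_zero {A : Matrix (Fin 2) (Fin 2) ℝ} (hA : A ≠ 0) :
    {ρ | kappaMatrix A ρ = 0}.Subsingleton := by
  intro ρ₁ h₁ ρ₂ h₂
  by_contra hne
  obtain ⟨h₁₀, h₁₁⟩ := kappaMatrix_eq_zero_iff.1 h₁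
  obtain ⟨h₂₀, h₂₁⟩ := kappaMatrix_eq_zero_iff.1 h₂
  have hsub : ρ₁ - ρ₂ ≠ 0 := sub_ne_zero.2 hne
  have h00 : A 0 0 = 0 := (mul_eq_zero.1 (by linear_combination h₁₀ - h₂₀)).resolve_right hsub
  have h01 : A 0 1 = 0 := (mul_eq_zero.1 (by linear_combination h₁₁ - h₂₁)).resolve_right hsub
  have h10 : A 1 0 = 0 := by linear_combination h₁₀ - ρ₁ * h00
  have h11 : A 1 1 = 0 := by linear_combination h₁₁ - ρ₁ * h01
  exact hA (Matrix.ext fun i j => by fin_cases i <;> fin_cases j <;> assumption)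

theorem ae_kappaMatrix_pos {μ : Measure ℝ} [NullSingletonClass μ] {A : Matrix (Fin 2) (Fin 2) ℝ}
    (hA : A ≠ 0) : ∀ᵐ ρ ∂μ, 0 < kappaMatrix A ρ :=
  measure_mono_null
    (fun ρ (hρ : ¬0 < kappaMatrix A ρ) => le_antisymm (not_lt.1 hρ) (kappaMatrix_nonneg A ρ))
    ((subsingleton_setOf_kappaMatrix_eq_zero hA).measure_zero μ)

theorem tendsto_kappaMatrix_atTop {ι : Type*} {l : Filter ι} {A : ι → Matrix (Fin 2) (Fin 2) ℝ}
    {B : Matrix (Fin 2) (Fin 2) ℝ} (hdir : Tendsto (fun i => ‖A i‖⁻¹ • A i) l (𝓝 B))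
    (hnorm : Tendsto (fun i => ‖A i‖) l atTop) {ρ : ℝ} (hρ : 0 < kappaMatrix B ρ) :
    Tendsto (fun i => kappaMatrix (A i) ρ) l atTop := by
  simp only [kappaMatrix_eq_norm_sq_mul (A _)]
  exact (tendsto_pow_atTop two_ne_zero |>.comp hnorm).atTop_mul_pos hρ
    ((continuous_kappaMatrix_apply ρ).tendsto B |>.comp hdir)

theorem Matrix.SpecialLinearGroup.val_ne_zero {n R : Type*} [Fintype n] [DecidableEq n]
    [Nonempty n] [CommRing R] [Nontrivial R] (g : SpecialLinearGroup n R) : g.1 ≠ 0 :=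
  fun h => g.det_ne_zero (by simp [h])

theorem gnorm_eq_norm (g : SL2) : gnorm g = ‖g.1‖ := by
  rw [gnorm, Matrix.frobenius_norm_def, Real.sqrt_eq_rpow]
  simp [Fin.sum_univ_two, add_assoc]

/-- If `‖g_n‖ → ∞` in `SL(2,ℝ)`, then some subsequence `(g_{n_p})` satisfies
`κ_{g_{n_p}} → ∞` almost uniformly with respect to the Cauchy measure `λ`: for every
`ε > 0` there is a measurable set `S` with `λ(ℝ \ S) ≤ ε` such that for every `M > 0`,
eventually in `p`, `κ_{g_{n_p}}(ρ) ≥ M` for all `ρ ∈ S`. -/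
theorem kappa_tendsto_infty_almost_uniformly
    (g : ℕ → SL2) (hg : Filter.Tendsto (fun n => gnorm (g n)) Filter.atTop Filter.atTop) :
    ∃ φ : ℕ → ℕ, StrictMono φ ∧
      ∀ ε > (0 : ℝ), ∃ S : Set ℝ, MeasurableSet S ∧ cauchyM Sᶜ ≤ ENNReal.ofReal ε ∧
        ∀ M > (0 : ℝ), ∃ P : ℕ, ∀ p ≥ P, ∀ ρ ∈ S, M ≤ kappa (g (φ p)) ρ := by
  simp only [kappa_eq_kappaMatrix]
  have hsphere (n : ℕ) : ‖(g n).1‖⁻¹ • (g n).1 ∈ Metric.sphere 0 1 := by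
    rw [mem_sphere_zero_iff_norm, norm_smul, norm_inv, norm_norm,
      inv_mul_cancel₀ (norm_ne_zero_iff.2 (g n).val_ne_zero)]
  obtain ⟨B, hB_mem, φ, hφ, hdir⟩ := (isCompact_sphere _ _).tendsto_subseq hsphere
  have hB : B ≠ 0 := ne_zero_of_mem_unit_sphere ⟨B, hB_mem⟩
  have hnorm : Tendsto (fun p => ‖(g (φ p)).1‖) atTop atTop := by
    simpa only [Function.comp_def, gnorm_eq_norm] using hg.comp hφ.tendsto_atTop
  refine ⟨φ, hφ, fun ε hε => ?_⟩
  obtain ⟨S, hS, hSc, hle⟩ := exists_eventually_forall_le_of_ae_tendsto_atTop (μ := cauchyM)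
    (fun p => measurable_kappaMatrix (g (φ p)).1)
    (by filter_upwards [ae_kappaMatrix_pos hB] with ρ hρ
          using tendsto_kappaMatrix_atTop hdir hnorm hρ) hε
  exact ⟨S, hS, hSc, fun M _ => (hle M).exists_forall_of_atTop⟩
end
end

section
/- For every β ∈ L²(λ), the orbit O_β = { T′(g)β : g ∈ SL(2,ℝ) } of β under the dual action T′ is open relative to its closure in the norm topology of L²(λ); that is, O_β is an open subset of the topological subspace cl(O_β) ⊆ L²(λ). (This is Piard's first sufficient condition, which ensures that all irreducible unitary representations of B(2,1) in the Hilbert topology are obtained by the inducing construction.) -/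
open MeasureTheory Matrix Filter Topology
open scoped ENNReal NNReal BoundedContinuousFunction

set_option synthInstance.maxHeartbeats 1000000
set_option maxHeartbeats 1000000

noncomputable section

/-- The orbit `O_β = {T′(g)β : g ∈ SL(2,ℝ)}` of `β ∈ L²(λ)` under the dual action
`(T′(g)β)(ρ) = κ_g(ρ)⁻² β(ρ·g)`. -/
def orbitT' (β : MeasureTheory.Lp ℝ 2 cauchyM) : Set (MeasureTheory.Lp ℝ 2 cauchyM) :=
  {γ | ∃ g : SL2, (γ : ℝ → ℝ) =ᵐ[cauchyM] fun ρ => (kappa g ρ ^ 2)⁻¹ * β (mob g ρ)}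

namespace Piard

lemma det2 (g : SL2) : g.1 0 0 * g.1 1 1 - g.1 0 1 * g.1 1 0 = 1 := by
  have := g.2; rwa [Matrix.det_fin_two] at this

lemma inv00 (g : SL2) : (g⁻¹).1 0 0 = g.1 1 1 := by
  rw [Matrix.SpecialLinearGroup.SL2_inv_expl]; rfl
lemma inv01 (g : SL2) : (g⁻¹).1 0 1 = -g.1 0 1 := by
  rw [Matrix.SpecialLinearGroup.SL2_inv_expl]; rfl
lemma inv10 (g : SL2) : (g⁻¹).1 1 0 = -g.1 1 0 := by
  rw [Matrix.SpecialLinearGroup.SL2_inv_expl]; rfl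
lemma inv11 (g : SL2) : (g⁻¹).1 1 1 = g.1 0 0 := by
  rw [Matrix.SpecialLinearGroup.SL2_inv_expl]; rfl

lemma kappa_num_pos (g : SL2) (ρ : ℝ) :
    0 < (g.1 0 0 * ρ + g.1 1 0) ^ 2 + (g.1 0 1 * ρ + g.1 1 1) ^ 2 := by
  have h1 : g.1 0 0 * (g.1 0 1 * ρ + g.1 1 1) - g.1 0 1 * (g.1 0 0 * ρ + g.1 1 0) = 1 := by
    linear_combination det2 g
  nlinarith [h1, sq_nonneg (g.1 0 0 * (g.1 0 0 * ρ + g.1 1 0) + g.1 0 1 * (g.1 0 1 * ρ + g.1 1 1)),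
    sq_nonneg (g.1 0 0), sq_nonneg (g.1 0 1),
    sq_nonneg (g.1 0 0 * ρ + g.1 1 0), sq_nonneg (g.1 0 1 * ρ + g.1 1 1)]

lemma kappa_pos (g : SL2) (ρ : ℝ) : 0 < kappa g ρ :=
  div_pos (kappa_num_pos g ρ) (by positivity)

/-- sum of squares of the entries -/
def Esq (g : SL2) : ℝ := g.1 0 0 ^ 2 + g.1 0 1 ^ 2 + g.1 1 0 ^ 2 + g.1 1 1 ^ 2

lemma kappa_le (g : SL2) (ρ : ℝ) : kappa g ρ ≤ Esq g := by
  simp only [kappa, Esq]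
  rw [div_le_iff₀ (by positivity)]
  nlinarith [sq_nonneg (g.1 0 0 - g.1 1 0 * ρ), sq_nonneg (g.1 0 1 - g.1 1 1 * ρ),
    sq_nonneg (g.1 1 0), sq_nonneg (g.1 1 1), sq_nonneg ρ]

lemma denom_null (g : SL2) : volume {σ : ℝ | g.1 0 1 * σ + g.1 1 1 = 0} = 0 := by
  by_cases hb : g.1 0 1 = 0
  · have hd : g.1 1 1 ≠ 0 := by
      intro h; have := det2 g; rw [hb, h] at this; simp at this
    have : {σ : ℝ | g.1 0 1 * σ + g.1 1 1 = 0} = ∅ := by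
      ext σ; simp [hb, hd]
    simp [this]
  · have : {σ : ℝ | g.1 0 1 * σ + g.1 1 1 = 0} = {-(g.1 1 1) / g.1 0 1} := by
      ext σ; simp only [Set.mem_setOf_eq, Set.mem_singleton_iff]
      constructor
      · intro h; field_simp; linarith
      · intro h; rw [h]; field_simp; ring
    rw [this]; exact measure_singleton _

lemma cauchyM_ac : cauchyM ≪ volume := withDensity_absolutelyContinuous _ _

lemma denom_null' (g : SL2) : cauchyM {σ : ℝ | g.1 0 1 * σ + g.1 1 1 = 0} = 0 :=
  cauchyM_ac (denom_null g)

lemma ae_s (g : SL2) : ∀ᵐ σ ∂cauchyM, g.1 0 1 * σ + g.1 1 1 ≠ 0 := by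
  rw [ae_iff]
  convert denom_null' g using 2
  simp

lemma ae_s_vol (g : SL2) : ∀ᵐ σ ∂(volume : Measure ℝ), g.1 0 1 * σ + g.1 1 1 ≠ 0 := by
  rw [ae_iff]
  convert denom_null g using 2
  simp

lemma mob_inv_denom (g : SL2) {σ : ℝ} (hσ : g.1 0 1 * σ + g.1 1 1 ≠ 0) :
    (g⁻¹).1 0 1 * mob g σ + (g⁻¹).1 1 1 = (g.1 0 1 * σ + g.1 1 1)⁻¹ := by
  rw [inv01, inv11, mob]
  field_simp
  linear_combination det2 g

lemma mob_inv_denom_ne (g : SL2) {σ : ℝ} (hσ : g.1 0 1 * σ + g.1 1 1 ≠ 0) :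
    (g⁻¹).1 0 1 * mob g σ + (g⁻¹).1 1 1 ≠ 0 := by
  rw [mob_inv_denom g hσ]; exact inv_ne_zero hσ

lemma mob_inv_num (g : SL2) {σ : ℝ} (hσ : g.1 0 1 * σ + g.1 1 1 ≠ 0) :
    (g⁻¹).1 0 0 * mob g σ + (g⁻¹).1 1 0 = σ / (g.1 0 1 * σ + g.1 1 1) := by
  rw [inv00, inv10, mob]
  rw [mul_div_assoc', div_add' _ _ _ hσ, div_left_inj' hσ]
  linear_combination σ * det2 g

lemma mob_mob_inv (g : SL2) {σ : ℝ} (hσ : g.1 0 1 * σ + g.1 1 1 ≠ 0) :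
    mob g⁻¹ (mob g σ) = σ := by
  rw [mob, mob_inv_num g hσ, mob_inv_denom g hσ]
  rw [div_inv_eq_mul, div_mul_cancel₀ _ hσ]

lemma sq_add_one_ne (σ : ℝ) : σ ^ 2 + 1 ≠ 0 := by positivity

lemma mob_sq_add_one (g : SL2) {σ : ℝ} (hσ : g.1 0 1 * σ + g.1 1 1 ≠ 0) :
    (mob g σ) ^ 2 + 1
      = ((g.1 0 0 * σ + g.1 1 0) ^ 2 + (g.1 0 1 * σ + g.1 1 1) ^ 2)
        / (g.1 0 1 * σ + g.1 1 1) ^ 2 := by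
  rw [mob, div_pow, div_add_one (pow_ne_zero 2 hσ)]

lemma kappa_mob_inv (g : SL2) {σ : ℝ} (hσ : g.1 0 1 * σ + g.1 1 1 ≠ 0) :
    kappa g⁻¹ (mob g σ) = (kappa g σ)⁻¹ := by
  have hN := (kappa_num_pos g σ).ne'
  have hσ' : σ * g.1 0 1 + g.1 1 1 ≠ 0 := by rwa [mul_comm] at hσ
  rw [kappa, mob_inv_num g hσ, mob_inv_denom g hσ, mob_sq_add_one g hσ, kappa, inv_div]
  field_simp


lemma continuous_kappa (g : SL2) : Continuous (kappa g) := by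
  unfold kappa
  exact Continuous.div (by fun_prop) (by fun_prop) (fun ρ => sq_add_one_ne ρ)

lemma measurable_mob (g : SL2) : Measurable (mob g) := by
  unfold mob
  exact Measurable.div (by fun_prop) (by fun_prop)

lemma measurableSet_s (g : SL2) : MeasurableSet {σ : ℝ | g.1 0 1 * σ + g.1 1 1 ≠ 0} := by
  have h : Continuous fun σ : ℝ => g.1 0 1 * σ + g.1 1 1 := by fun_prop
  exact (h.measurable (measurableSet_singleton 0).compl)

lemma hasDeriv_mob (g : SL2) {σ : ℝ} (hσ : g.1 0 1 * σ + g.1 1 1 ≠ 0) :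
    HasDerivAt (mob g) (((g.1 0 1 * σ + g.1 1 1) ^ 2)⁻¹) σ := by
  have h1 : HasDerivAt (fun σ : ℝ => g.1 0 0 * σ + g.1 1 0) (g.1 0 0) σ := by
    simpa using ((hasDerivAt_id σ).const_mul (g.1 0 0)).add_const (g.1 1 0)
  have h2 : HasDerivAt (fun σ : ℝ => g.1 0 1 * σ + g.1 1 1) (g.1 0 1) σ := by
    simpa using ((hasDerivAt_id σ).const_mul (g.1 0 1)).add_const (g.1 1 1)
  have h := h1.div h2 hσ
  refine h.congr_deriv ?_
  symm
  rw [eq_div_iff (by positivity), inv_mul_cancel₀ (by positivity)]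
  linear_combination (-1 : ℝ) * det2 g

lemma mob_injOn (g : SL2) : Set.InjOn (mob g) {σ : ℝ | g.1 0 1 * σ + g.1 1 1 ≠ 0} := by
  intro x hx y hy h
  rw [mob, mob, div_eq_div_iff hx hy] at h
  linear_combination h + (y - x) * det2 g

lemma mob_image (g : SL2) :
    mob g '' {σ : ℝ | g.1 0 1 * σ + g.1 1 1 ≠ 0}
      = {τ : ℝ | (g⁻¹).1 0 1 * τ + (g⁻¹).1 1 1 ≠ 0} := by
  ext τ
  constructor
  · rintro ⟨σ, hσ, rfl⟩
    exact mob_inv_denom_ne g hσ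
  · intro hτ
    refine ⟨mob g⁻¹ τ, ?_, ?_⟩
    · have := mob_inv_denom_ne g⁻¹ hτ; rwa [inv_inv] at this
    · have := mob_mob_inv g⁻¹ hτ; rwa [inv_inv] at this

lemma density_id (g : SL2) {σ : ℝ} (hσ : g.1 0 1 * σ + g.1 1 1 ≠ 0) :
    |((g.1 0 1 * σ + g.1 1 1) ^ 2)⁻¹| * (1 / (Real.pi * (1 + (mob g σ) ^ 2)))
      = (1 / (Real.pi * (1 + σ ^ 2))) * (kappa g σ)⁻¹ := by
  have hN := (kappa_num_pos g σ).ne'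
  rw [abs_of_nonneg (by positivity), add_comm (1 : ℝ), mob_sq_add_one g hσ, kappa, inv_div]
  field_simp
  ring

lemma lintegral_image_abs_deriv {s : Set ℝ} {f f' : ℝ → ℝ}
    (hs : MeasurableSet s) (hf' : ∀ x ∈ s, HasDerivWithinAt f (f' x) s x)
    (hf : Set.InjOn f s) (g : ℝ → ℝ≥0∞) :
    ∫⁻ x in f '' s, g x = ∫⁻ x in s, ENNReal.ofReal |f' x| * g (f x) := by
  simpa only [ContinuousLinearMap.det_toSpanSingleton] using
    MeasureTheory.lintegral_image_eq_lintegral_abs_det_fderiv_mul volume hs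
      (fun x hx => (hf' x hx).hasFDerivWithinAt) hf g

lemma s_ae_univ (g : SL2) :
    {σ : ℝ | g.1 0 1 * σ + g.1 1 1 ≠ 0} =ᵐ[(volume : Measure ℝ)] Set.univ := by
  rw [Filter.eventuallyEq_set]
  filter_upwards [ae_s_vol g] with σ hσ
  simp [hσ]

lemma measurable_pd : Measurable fun ρ : ℝ => ENNReal.ofReal (1 / (Real.pi * (1 + ρ ^ 2))) := by
  fun_prop

lemma lintegral_mob (g : SL2) (F : ℝ → ℝ≥0∞) :
    ∫⁻ ρ, F ρ ∂cauchyM = ∫⁻ σ, F (mob g σ) * ENNReal.ofReal (kappa g σ)⁻¹ ∂cauchyM := by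
  rw [cauchyM, lintegral_withDensity_eq_lintegral_mul_non_measurable _ measurable_pd
      (Filter.Eventually.of_forall fun ρ => ENNReal.ofReal_lt_top),
    lintegral_withDensity_eq_lintegral_mul_non_measurable _ measurable_pd
      (Filter.Eventually.of_forall fun ρ => ENNReal.ofReal_lt_top)]
  simp only [Pi.mul_apply]
  calc ∫⁻ ρ, ENNReal.ofReal (1 / (Real.pi * (1 + ρ ^ 2))) * F ρ
      = ∫⁻ ρ in {τ : ℝ | (g⁻¹).1 0 1 * τ + (g⁻¹).1 1 1 ≠ 0},
          ENNReal.ofReal (1 / (Real.pi * (1 + ρ ^ 2))) * F ρ := by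
        rw [setLIntegral_congr (s_ae_univ g⁻¹), setLIntegral_univ]
    _ = ∫⁻ ρ in mob g '' {σ : ℝ | g.1 0 1 * σ + g.1 1 1 ≠ 0},
          ENNReal.ofReal (1 / (Real.pi * (1 + ρ ^ 2))) * F ρ := by rw [mob_image]
    _ = ∫⁻ σ in {σ : ℝ | g.1 0 1 * σ + g.1 1 1 ≠ 0},
          ENNReal.ofReal |((g.1 0 1 * σ + g.1 1 1) ^ 2)⁻¹| *
            (ENNReal.ofReal (1 / (Real.pi * (1 + (mob g σ) ^ 2))) * F (mob g σ)) := by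
        exact lintegral_image_abs_deriv (measurableSet_s g)
          (fun x hx => (hasDeriv_mob g hx).hasDerivWithinAt) (mob_injOn g) _
    _ = ∫⁻ σ in {σ : ℝ | g.1 0 1 * σ + g.1 1 1 ≠ 0},
          ENNReal.ofReal (1 / (Real.pi * (1 + σ ^ 2))) *
            (F (mob g σ) * ENNReal.ofReal (kappa g σ)⁻¹) := by
        apply setLIntegral_congr_fun (measurableSet_s g)
        intro σ hσ
        dsimp only
        rw [← mul_assoc, ← ENNReal.ofReal_mul (abs_nonneg _), density_id g hσ,
          ENNReal.ofReal_mul (by positivity), mul_assoc, mul_comm (ENNReal.ofReal (kappa g σ)⁻¹)]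
    _ = ∫⁻ σ, ENNReal.ofReal (1 / (Real.pi * (1 + σ ^ 2))) *
            (F (mob g σ) * ENNReal.ofReal (kappa g σ)⁻¹) := by
        rw [setLIntegral_congr (s_ae_univ g), setLIntegral_univ]

lemma integral_image_abs_deriv {s : Set ℝ} {f f' : ℝ → ℝ}
    (hs : MeasurableSet s) (hf' : ∀ x ∈ s, HasDerivWithinAt f (f' x) s x)
    (hf : Set.InjOn f s) (g : ℝ → ℝ) :
    ∫ x in f '' s, g x = ∫ x in s, |f' x| * g (f x) :=
  MeasureTheory.integral_image_eq_integral_abs_deriv_smul hs hf' hf g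

lemma cauchyM_eq_nnreal : cauchyM
    = volume.withDensity fun ρ : ℝ => ((Real.toNNReal (1 / (Real.pi * (1 + ρ ^ 2))) : ℝ≥0) : ℝ≥0∞) :=
  rfl

lemma measurable_pdn : Measurable fun ρ : ℝ => Real.toNNReal (1 / (Real.pi * (1 + ρ ^ 2))) := by
  fun_prop

lemma integral_mob (g : SL2) (f : ℝ → ℝ) :
    ∫ ρ, f ρ ∂cauchyM = ∫ σ, (kappa g σ)⁻¹ * f (mob g σ) ∂cauchyM := by
  rw [cauchyM_eq_nnreal, integral_withDensity_eq_integral_smul measurable_pdn,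
    integral_withDensity_eq_integral_smul measurable_pdn]
  have hsm : ∀ (ρ : ℝ) (x : ℝ), Real.toNNReal (1 / (Real.pi * (1 + ρ ^ 2))) • x
      = (1 / (Real.pi * (1 + ρ ^ 2))) * x := by
    intro ρ x
    rw [NNReal.smul_def, Real.coe_toNNReal _ (by positivity), smul_eq_mul]
  simp only [hsm]
  calc ∫ ρ, (1 / (Real.pi * (1 + ρ ^ 2))) * f ρ
      = ∫ ρ in {τ : ℝ | (g⁻¹).1 0 1 * τ + (g⁻¹).1 1 1 ≠ 0},
          (1 / (Real.pi * (1 + ρ ^ 2))) * f ρ := by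
        rw [setIntegral_congr_set (s_ae_univ g⁻¹), setIntegral_univ]
    _ = ∫ ρ in mob g '' {σ : ℝ | g.1 0 1 * σ + g.1 1 1 ≠ 0},
          (1 / (Real.pi * (1 + ρ ^ 2))) * f ρ := by rw [mob_image]
    _ = ∫ σ in {σ : ℝ | g.1 0 1 * σ + g.1 1 1 ≠ 0},
          |((g.1 0 1 * σ + g.1 1 1) ^ 2)⁻¹| *
            ((1 / (Real.pi * (1 + (mob g σ) ^ 2))) * f (mob g σ)) := by
        exact integral_image_abs_deriv (measurableSet_s g)
          (fun x hx => (hasDeriv_mob g hx).hasDerivWithinAt) (mob_injOn g) _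
    _ = ∫ σ in {σ : ℝ | g.1 0 1 * σ + g.1 1 1 ≠ 0},
          (1 / (Real.pi * (1 + σ ^ 2))) * ((kappa g σ)⁻¹ * f (mob g σ)) := by
        apply setIntegral_congr_fun (measurableSet_s g)
        intro σ hσ
        dsimp only
        rw [← mul_assoc, density_id g hσ, mul_assoc]
    _ = ∫ σ, (1 / (Real.pi * (1 + σ ^ 2))) * ((kappa g σ)⁻¹ * f (mob g σ)) := by
        rw [setIntegral_congr_set (s_ae_univ g), setIntegral_univ]

lemma pd_integrable : Integrable (fun ρ : ℝ => 1 / (Real.pi * (1 + ρ ^ 2))) := by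
  have h := integrable_inv_one_add_sq.const_mul (1 / Real.pi)
  apply h.congr
  filter_upwards with ρ
  rw [one_div, one_div, mul_inv]

instance : IsFiniteMeasure cauchyM := by
  constructor
  rw [cauchyM, withDensity_apply _ MeasurableSet.univ, setLIntegral_univ,
    ← ofReal_integral_eq_lintegral_ofReal pd_integrable
      (Filter.Eventually.of_forall fun ρ => by positivity)]
  exact ENNReal.ofReal_lt_top
def Tf (β : Lp ℝ 2 cauchyM) (g : SL2) : ℝ → ℝ :=
  fun ρ => (kappa g ρ ^ 2)⁻¹ * (β : ℝ → ℝ) (mob g ρ)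

lemma measurable_Tf (β : Lp ℝ 2 cauchyM) (g : SL2) : Measurable (Tf β g) := by
  apply Measurable.mul
  · exact (((continuous_kappa g).pow 2).measurable).inv
  · exact (Lp.stronglyMeasurable β).measurable.comp (measurable_mob g)

lemma enn_sq (x : ℝ) : ((‖x‖₊ : ℝ≥0∞)) ^ 2 = ENNReal.ofReal (x ^ 2) := by
  rw [← enorm_eq_nnnorm, Real.enorm_eq_ofReal_abs, ← ENNReal.ofReal_pow (abs_nonneg x), sq_abs]

lemma lint_sq (β : Lp ℝ 2 cauchyM) (g : SL2) :
    ∫⁻ ρ, ((‖Tf β g ρ‖₊ : ℝ≥0∞)) ^ 2 ∂cauchyM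
      = ∫⁻ σ, (ENNReal.ofReal (kappa g⁻¹ σ)) ^ 3 * ((‖(β : ℝ → ℝ) σ‖₊ : ℝ≥0∞)) ^ 2 ∂cauchyM := by
  rw [lintegral_mob g⁻¹ (fun ρ => ((‖Tf β g ρ‖₊ : ℝ≥0∞)) ^ 2)]
  apply lintegral_congr_ae
  filter_upwards [ae_s g⁻¹] with σ hσ
  have h1 : mob g (mob g⁻¹ σ) = σ := by have := mob_mob_inv g⁻¹ hσ; rwa [inv_inv] at this
  have h2 : kappa g (mob g⁻¹ σ) = (kappa g⁻¹ σ)⁻¹ := by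
    have := kappa_mob_inv g⁻¹ hσ; rwa [inv_inv] at this
  have hk := kappa_pos g⁻¹ σ
  simp only [Tf]
  rw [h1, h2, inv_pow, inv_inv, enn_sq, enn_sq,
    ENNReal.ofReal_inv_of_pos hk,
    ← ENNReal.ofReal_pow hk.le,
    ← ENNReal.ofReal_mul (by positivity),
    ← ENNReal.ofReal_inv_of_pos hk,
    ← ENNReal.ofReal_mul (by positivity)]
  congr 1
  have hk1 : kappa (1 / g) σ ≠ 0 := by rw [one_div]; exact hk.ne'
  field_simp

lemma integrable_beta_sq (β : Lp ℝ 2 cauchyM) :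
    Integrable (fun σ => ((β : ℝ → ℝ) σ) ^ 2) cauchyM := by
  have h := (Lp.memLp β).integrable_norm_rpow (by norm_num) (by norm_num)
  apply h.congr
  filter_upwards with σ
  rw [show ((2 : ℝ≥0∞)).toReal = ((2 : ℕ) : ℝ) by norm_num, Real.rpow_natCast,
    Real.norm_eq_abs, sq_abs]

lemma lint_beta_sq (β : Lp ℝ 2 cauchyM) :
    ∫⁻ σ, ((‖(β : ℝ → ℝ) σ‖₊ : ℝ≥0∞)) ^ 2 ∂cauchyM
      = ENNReal.ofReal (∫ σ, ((β : ℝ → ℝ) σ) ^ 2 ∂cauchyM) := by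
  rw [ofReal_integral_eq_lintegral_ofReal (integrable_beta_sq β)
    (Filter.Eventually.of_forall fun σ => by positivity)]
  exact lintegral_congr fun σ => enn_sq _

lemma lint_beta_sq_lt_top (β : Lp ℝ 2 cauchyM) :
    ∫⁻ σ, ((‖(β : ℝ → ℝ) σ‖₊ : ℝ≥0∞)) ^ 2 ∂cauchyM < ⊤ := by
  rw [lint_beta_sq]; exact ENNReal.ofReal_lt_top

lemma Esq_nonneg (g : SL2) : 0 ≤ Esq g := by unfold Esq; positivity

lemma memLp_Tf (β : Lp ℝ 2 cauchyM) (g : SL2) : MemLp (Tf β g) 2 cauchyM := by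
  constructor
  · exact (measurable_Tf β g).aestronglyMeasurable
  · rw [eLpNorm_eq_lintegral_rpow_enorm_toReal (two_ne_zero) ENNReal.ofNat_ne_top]
    have h2 : ((2 : ℝ≥0∞)).toReal = ((2 : ℕ) : ℝ) := by norm_num
    simp only [h2, ENNReal.rpow_natCast, enorm_eq_nnnorm]
    apply ENNReal.rpow_lt_top_of_nonneg (by norm_num)
    rw [lint_sq β g]
    have hb : ∀ σ : ℝ, (ENNReal.ofReal (kappa g⁻¹ σ)) ^ 3 * ((‖(β : ℝ → ℝ) σ‖₊ : ℝ≥0∞)) ^ 2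
        ≤ ENNReal.ofReal (Esq g⁻¹) ^ 3 * ((‖(β : ℝ → ℝ) σ‖₊ : ℝ≥0∞)) ^ 2 := by
      intro σ
      gcongr
      exact kappa_le g⁻¹ σ
    apply ne_of_lt
    calc ∫⁻ σ, (ENNReal.ofReal (kappa g⁻¹ σ)) ^ 3 * ((‖(β : ℝ → ℝ) σ‖₊ : ℝ≥0∞)) ^ 2 ∂cauchyM
        ≤ ∫⁻ σ, ENNReal.ofReal (Esq g⁻¹) ^ 3 * ((‖(β : ℝ → ℝ) σ‖₊ : ℝ≥0∞)) ^ 2 ∂cauchyM :=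
          lintegral_mono hb
      _ = ENNReal.ofReal (Esq g⁻¹) ^ 3 * ∫⁻ σ, ((‖(β : ℝ → ℝ) σ‖₊ : ℝ≥0∞)) ^ 2 ∂cauchyM :=
          lintegral_const_mul' _ _ (ENNReal.pow_ne_top ENNReal.ofReal_ne_top)
      _ < ⊤ := ENNReal.mul_lt_top (ENNReal.pow_lt_top ENNReal.ofReal_lt_top) (lint_beta_sq_lt_top β)

lemma integral_Tf_mul (β : Lp ℝ 2 cauchyM) (g : SL2) (φ : ℝ → ℝ) :
    ∫ ρ, Tf β g ρ * φ ρ ∂cauchyM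
      = ∫ σ, kappa g⁻¹ σ * ((β : ℝ → ℝ) σ * φ (mob g⁻¹ σ)) ∂cauchyM := by
  rw [integral_mob g⁻¹ (fun ρ => Tf β g ρ * φ ρ)]
  apply integral_congr_ae
  filter_upwards [ae_s g⁻¹] with σ hσ
  have h1 : mob g (mob g⁻¹ σ) = σ := by have := mob_mob_inv g⁻¹ hσ; rwa [inv_inv] at this
  have h2 : kappa g (mob g⁻¹ σ) = (kappa g⁻¹ σ)⁻¹ := by
    have := kappa_mob_inv g⁻¹ hσ; rwa [inv_inv] at this
  have hk := kappa_pos g⁻¹ σ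
  simp only [Tf]
  rw [h1, h2, inv_pow, inv_inv]
  have hk1 : kappa (1 / g) σ ≠ 0 := by rw [one_div]; exact hk.ne'
  field_simp
def wt (A B σ : ℝ) : ℝ := (A * σ + B) ^ 6 / (σ ^ 2 + 1) ^ 3

lemma wt_nonneg (A B σ : ℝ) : 0 ≤ wt A B σ := by unfold wt; positivity

lemma wt_le (A B σ : ℝ) : wt A B σ ≤ (A ^ 2 + B ^ 2) ^ 3 := by
  unfold wt
  rw [div_le_iff₀ (by positivity)]
  have h1 : (A * σ + B) ^ 2 ≤ (A ^ 2 + B ^ 2) * (σ ^ 2 + 1) := by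
    nlinarith [sq_nonneg (A - B * σ)]
  calc (A * σ + B) ^ 6 = ((A * σ + B) ^ 2) ^ 3 := by ring
    _ ≤ ((A ^ 2 + B ^ 2) * (σ ^ 2 + 1)) ^ 3 := pow_le_pow_left₀ (sq_nonneg _) h1 3
    _ = (A ^ 2 + B ^ 2) ^ 3 * (σ ^ 2 + 1) ^ 3 := by ring

lemma continuous_wt_sigma (A B : ℝ) : Continuous fun σ => wt A B σ := by
  unfold wt
  exact Continuous.div (by fun_prop) (by fun_prop) (fun σ => by positivity)

def Pfun (β : Lp ℝ 2 cauchyM) (z : ℝ × ℝ) : ℝ :=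
  ∫ σ, wt z.1 z.2 σ * ((β : ℝ → ℝ) σ) ^ 2 ∂cauchyM

lemma integrable_wt_mul (β : Lp ℝ 2 cauchyM) (A B : ℝ) :
    Integrable (fun σ => wt A B σ * ((β : ℝ → ℝ) σ) ^ 2) cauchyM := by
  apply (integrable_beta_sq β).bdd_mul (c := (A ^ 2 + B ^ 2) ^ 3) ((continuous_wt_sigma A B).aestronglyMeasurable)
  exact Filter.Eventually.of_forall fun σ => by
    rw [Real.norm_eq_abs, abs_of_nonneg (wt_nonneg A B σ)]; exact wt_le A B σ

lemma continuous_Pfun (β : Lp ℝ 2 cauchyM) : Continuous (Pfun β) := by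
  rw [continuous_iff_continuousAt]
  intro z₀
  apply continuousAt_of_dominated (bound := fun σ => (2 * (‖z₀‖ + 1) ^ 2) ^ 3 * ((β : ℝ → ℝ) σ) ^ 2)
  · exact Filter.Eventually.of_forall fun z => (integrable_wt_mul β z.1 z.2).aestronglyMeasurable
  · filter_upwards [Metric.ball_mem_nhds z₀ one_pos] with z hz
    apply Filter.Eventually.of_forall
    intro σ
    have ha : |z.1| ≤ ‖z₀‖ + 1 := by
      have h1 : ‖z.1‖ ≤ ‖z‖ := norm_fst_le z
      have h2 : ‖z‖ ≤ ‖z₀‖ + ‖z - z₀‖ := by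
        calc ‖z‖ = ‖z₀ + (z - z₀)‖ := by ring_nf
          _ ≤ ‖z₀‖ + ‖z - z₀‖ := norm_add_le _ _
      have h3 : ‖z - z₀‖ < 1 := by rwa [Metric.mem_ball, dist_eq_norm] at hz
      rw [Real.norm_eq_abs] at h1
      linarith
    have hb : |z.2| ≤ ‖z₀‖ + 1 := by
      have h1 : ‖z.2‖ ≤ ‖z‖ := norm_snd_le z
      have h2 : ‖z‖ ≤ ‖z₀‖ + ‖z - z₀‖ := by
        calc ‖z‖ = ‖z₀ + (z - z₀)‖ := by ring_nf
          _ ≤ ‖z₀‖ + ‖z - z₀‖ := norm_add_le _ _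
      have h3 : ‖z - z₀‖ < 1 := by rwa [Metric.mem_ball, dist_eq_norm] at hz
      rw [Real.norm_eq_abs] at h1
      linarith
    have hz12 : z.1 ^ 2 + z.2 ^ 2 ≤ 2 * (‖z₀‖ + 1) ^ 2 := by
      nlinarith [sq_abs z.1, sq_abs z.2, abs_nonneg z.1, abs_nonneg z.2]
    rw [Real.norm_eq_abs, abs_of_nonneg (mul_nonneg (wt_nonneg _ _ _) (sq_nonneg _))]
    have := wt_le z.1 z.2 σ
    have h5 : wt z.1 z.2 σ ≤ (2 * (‖z₀‖ + 1) ^ 2) ^ 3 := by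
      refine this.trans (pow_le_pow_left₀ (by positivity) hz12 3)
    exact mul_le_mul_of_nonneg_right h5 (sq_nonneg _)
  · exact (integrable_beta_sq β).const_mul _
  · apply Filter.Eventually.of_forall
    intro σ
    apply ContinuousAt.mul _ continuousAt_const
    have : Continuous fun z : ℝ × ℝ => wt z.1 z.2 σ := by
      unfold wt
      exact Continuous.div (by fun_prop) continuous_const (fun _ => by positivity)
    exact this.continuousAt

lemma lin_null (a b : ℝ) (h : ¬(a = 0 ∧ b = 0)) : cauchyM {σ : ℝ | a * σ + b = 0} = 0 := by
  apply cauchyM_ac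
  by_cases ha : a = 0
  · have hb : b ≠ 0 := fun hb => h ⟨ha, hb⟩
    have : {σ : ℝ | a * σ + b = 0} = ∅ := by ext σ; simp [ha, hb]
    simp [this]
  · have : {σ : ℝ | a * σ + b = 0} = {-b / a} := by
      ext σ; simp only [Set.mem_setOf_eq, Set.mem_singleton_iff]
      constructor
      · intro hs; field_simp; linarith
      · intro hs; rw [hs]; field_simp; ring
    rw [this]; exact measure_singleton _

lemma Pfun_nonneg (β : Lp ℝ 2 cauchyM) (z : ℝ × ℝ) : 0 ≤ Pfun β z :=
  integral_nonneg fun σ => mul_nonneg (wt_nonneg _ _ _) (sq_nonneg _)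

lemma Pfun_pos (β : Lp ℝ 2 cauchyM) (hβ : ¬((β : ℝ → ℝ) =ᵐ[cauchyM] 0))
    (z : ℝ × ℝ) (hz : z ≠ 0) : 0 < Pfun β z := by
  rcases (Pfun_nonneg β z).lt_or_eq with h | h
  · exact h
  exfalso
  apply hβ
  have h0 := (integral_eq_zero_iff_of_nonneg
    (fun σ => mul_nonneg (wt_nonneg _ _ _) (sq_nonneg _)) (integrable_wt_mul β z.1 z.2)).1 h.symm
  have hzz : ¬(z.1 = 0 ∧ z.2 = 0) := by
    intro ⟨h1, h2⟩; exact hz (Prod.ext h1 h2)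
  have hnull : ∀ᵐ σ ∂cauchyM, z.1 * σ + z.2 ≠ 0 := by
    rw [ae_iff]
    convert lin_null z.1 z.2 hzz using 2
    simp
  filter_upwards [h0, hnull] with σ h1 h2
  have hwt : wt z.1 z.2 σ ≠ 0 := by
    unfold wt
    apply div_ne_zero (pow_ne_zero _ h2) (by positivity)
  have := mul_eq_zero.1 h1
  rcases this with h | h
  · exact absurd h hwt
  · exact pow_eq_zero_iff (n := 2) (by norm_num) |>.1 h

lemma Pfun_smul (β : Lp ℝ 2 cauchyM) (r : ℝ) (z : ℝ × ℝ) :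
    Pfun β (r • z) = r ^ 6 * Pfun β z := by
  unfold Pfun
  rw [← smul_eq_mul, ← integral_smul]
  apply integral_congr_ae
  apply Filter.Eventually.of_forall
  intro σ
  dsimp only
  rw [smul_eq_mul]
  have h1 : (r • z).1 = r * z.1 := rfl
  have h2 : (r • z).2 = r * z.2 := rfl
  rw [h1, h2]
  unfold wt
  field_simp

lemma exists_Pmin (β : Lp ℝ 2 cauchyM) (hβ : ¬((β : ℝ → ℝ) =ᵐ[cauchyM] 0)) :
    ∃ c : ℝ, 0 < c ∧ ∀ z : ℝ × ℝ, z ≠ 0 →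
      c * ((z.1 ^ 2 + z.2 ^ 2) / 2) ^ 3 ≤ Pfun β z := by
  have hne : (Metric.sphere (0 : ℝ × ℝ) 1).Nonempty := by
    refine ⟨(1, 0), ?_⟩
    rw [mem_sphere_iff_norm, sub_zero, Prod.norm_def]
    simp
  obtain ⟨z₀, hz₀, hmin⟩ := (isCompact_sphere (0 : ℝ × ℝ) 1).exists_isMinOn hne
    ((continuous_Pfun β).continuousOn)
  have hz₀ne : z₀ ≠ 0 := by
    intro h
    rw [mem_sphere_iff_norm, sub_zero, h] at hz₀
    simp at hz₀
  refine ⟨Pfun β z₀, Pfun_pos β hβ z₀ hz₀ne, ?_⟩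
  intro z hz
  have hr : 0 < ‖z‖ := norm_pos_iff.mpr hz
  have hw : ‖z‖⁻¹ • z ∈ Metric.sphere (0 : ℝ × ℝ) 1 := by
    rw [mem_sphere_iff_norm, sub_zero, norm_smul, norm_inv, norm_norm,
      inv_mul_cancel₀ hr.ne']
  have h1 : Pfun β z₀ ≤ Pfun β (‖z‖⁻¹ • z) := hmin hw
  have h2 : Pfun β z = ‖z‖ ^ 6 * Pfun β (‖z‖⁻¹ • z) := by
    conv_lhs => rw [← smul_inv_smul₀ hr.ne' z]
    rw [Pfun_smul]
  have h3 : (z.1 ^ 2 + z.2 ^ 2) / 2 ≤ ‖z‖ ^ 2 := by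
    have ha : |z.1| ≤ ‖z‖ := by simpa [Real.norm_eq_abs] using norm_fst_le z
    have hb : |z.2| ≤ ‖z‖ := by simpa [Real.norm_eq_abs] using norm_snd_le z
    nlinarith [sq_abs z.1, sq_abs z.2, abs_nonneg z.1, abs_nonneg z.2]
  calc Pfun β z₀ * ((z.1 ^ 2 + z.2 ^ 2) / 2) ^ 3
      ≤ Pfun β z₀ * (‖z‖ ^ 2) ^ 3 := by
        apply mul_le_mul_of_nonneg_left (pow_le_pow_left₀ (by positivity) h3 3)
          (Pfun_pos β hβ z₀ hz₀ne).le
    _ = ‖z‖ ^ 6 * Pfun β z₀ := by ring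
    _ ≤ ‖z‖ ^ 6 * Pfun β (‖z‖⁻¹ • z) := by
        exact mul_le_mul_of_nonneg_left h1 (by positivity)
    _ = Pfun β z := h2.symm

lemma le_max_of_cube {x y : ℝ} (hx : 0 ≤ x) (h : x ^ 3 ≤ y) : x ≤ max 1 y := by
  rcases le_total x 1 with h1 | h1
  · exact h1.trans (le_max_left _ _)
  · refine le_trans ?_ ((le_max_right 1 y).trans' h)
    nlinarith [mul_nonneg (mul_nonneg hx (sub_nonneg.2 h1)) (by linarith : (0:ℝ) ≤ x + 1)]
lemma entry_bound (β : Lp ℝ 2 cauchyM) (hβ : ¬((β : ℝ → ℝ) =ᵐ[cauchyM] 0)) (R : ℝ) (hR : 0 ≤ R) :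
    ∃ M : ℝ, ∀ h : SL2,
      (∫⁻ σ, (ENNReal.ofReal (kappa h σ)) ^ 3 * ((‖(β : ℝ → ℝ) σ‖₊ : ℝ≥0∞)) ^ 2 ∂cauchyM)
        ≤ ENNReal.ofReal R → Esq h ≤ M := by
  obtain ⟨c, hc, hlow⟩ := exists_Pmin β hβ
  refine ⟨2 * max 1 (8 * R / c), ?_⟩
  intro h hint
  set a := h.1 0 0 with ha'
  set b := h.1 0 1 with hb'
  set c10 := h.1 1 0 with hc'
  set d := h.1 1 1 with hd'
  set A := a ^ 2 + b ^ 2 with hA'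
  set B := a * c10 + b * d with hB'
  have hdet : a * d - b * c10 = 1 := det2 h
  have hA : 0 < A := by
    rcases (by positivity : (0:ℝ) ≤ A).lt_or_eq with h1 | h1
    · exact h1
    · exfalso
      have ha0 : a = 0 := by nlinarith [sq_nonneg a, sq_nonneg b]
      have hb0 : b = 0 := by nlinarith [sq_nonneg a, sq_nonneg b]
      rw [ha0, hb0] at hdet
      norm_num at hdet
  have hAC : A * (c10 ^ 2 + d ^ 2) = B ^ 2 + 1 := by
    rw [hA', hB']; linear_combination (a * d - b * c10 + 1) * hdet
  have hkappa : ∀ σ, kappa h σ = ((A * σ + B) ^ 2 + 1) / (A * (σ ^ 2 + 1)) := by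
    intro σ
    rw [kappa, div_eq_div_iff (by positivity) (by positivity), hA', hB']
    linear_combination ((σ ^ 2 + 1) * (a * d - b * c10 + 1)) * hdet
  have hpt1 : ∀ σ, wt A B σ / A ^ 3 ≤ (kappa h σ) ^ 3 := by
    intro σ
    rw [hkappa σ, div_pow]
    have e1 : wt A B σ / A ^ 3 = ((A * σ + B) ^ 2) ^ 3 / (A * (σ ^ 2 + 1)) ^ 3 := by
      unfold wt; field_simp
    rw [e1]
    gcongr
    nlinarith [sq_nonneg (A * σ + B)]
  have hpt2 : ∀ σ, wt 0 1 σ / A ^ 3 ≤ (kappa h σ) ^ 3 := by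
    intro σ
    rw [hkappa σ, div_pow]
    have e1 : wt 0 1 σ / A ^ 3 = ((0 * σ + 1) ^ 2) ^ 3 / (A * (σ ^ 2 + 1)) ^ 3 := by
      unfold wt; field_simp
    rw [e1]
    gcongr
    nlinarith [sq_nonneg (A * σ + B)]
  have key : ∀ A' B' : ℝ, (∀ σ, wt A' B' σ / A ^ 3 ≤ (kappa h σ) ^ 3) →
      Pfun β (A', B') ≤ R * A ^ 3 := by
    intro A' B' hpt
    have hi : Integrable (fun σ => (wt A' B' σ / A ^ 3) * ((β : ℝ → ℝ) σ) ^ 2) cauchyM := by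
      apply ((integrable_wt_mul β A' B').div_const (A ^ 3)).congr
      exact Filter.Eventually.of_forall fun σ => by ring
    have h1 : ENNReal.ofReal (∫ σ, (wt A' B' σ / A ^ 3) * ((β : ℝ → ℝ) σ) ^ 2 ∂cauchyM)
        ≤ ENNReal.ofReal R := by
      rw [ofReal_integral_eq_lintegral_ofReal hi
        (Filter.Eventually.of_forall fun σ =>
          mul_nonneg (div_nonneg (wt_nonneg _ _ _) (by positivity)) (sq_nonneg _))]
      refine le_trans (lintegral_mono fun σ => ?_) hint
      calc ENNReal.ofReal ((wt A' B' σ / A ^ 3) * ((β : ℝ → ℝ) σ) ^ 2)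
          ≤ ENNReal.ofReal ((kappa h σ) ^ 3 * ((β : ℝ → ℝ) σ) ^ 2) :=
            ENNReal.ofReal_le_ofReal (mul_le_mul_of_nonneg_right (hpt σ) (sq_nonneg _))
        _ = (ENNReal.ofReal (kappa h σ)) ^ 3 * ((‖(β : ℝ → ℝ) σ‖₊ : ℝ≥0∞)) ^ 2 := by
            rw [ENNReal.ofReal_mul (pow_nonneg (kappa_pos h σ).le 3),
              ENNReal.ofReal_pow (kappa_pos h σ).le, enn_sq]
    have hint2 := (ENNReal.ofReal_le_ofReal_iff hR).1 h1
    have h2 : ∫ σ, (wt A' B' σ / A ^ 3) * ((β : ℝ → ℝ) σ) ^ 2 ∂cauchyM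
        = (A ^ 3)⁻¹ * Pfun β (A', B') := by
      unfold Pfun
      rw [← smul_eq_mul, ← integral_smul]
      exact integral_congr_ae (Filter.Eventually.of_forall fun σ => by
        dsimp only; rw [smul_eq_mul]; ring)
    rw [h2] at hint2
    have h3 := mul_le_mul_of_nonneg_left hint2 (le_of_lt (pow_pos hA 3))
    rw [mul_inv_cancel_left₀ (by positivity)] at h3
    linarith [h3]
  clear_value a b c10 d A B
  have hP1 := key A B hpt1
  have hP2 := key 0 1 hpt2
  have hz1 : ((A, B) : ℝ × ℝ) ≠ 0 := fun hzz => hA.ne' (congrArg Prod.fst hzz)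
  have hz2 : (((0 : ℝ), (1 : ℝ)) : ℝ × ℝ) ≠ 0 :=
    fun hzz => one_ne_zero (congrArg Prod.snd hzz)
  have hL1 := hlow (A, B) hz1
  have hL2 := hlow (0, 1) hz2
  dsimp only at hL1 hL2
  have hx3 : ((A ^ 2 + B ^ 2) / A) ^ 3 ≤ 8 * R / c := by
    rw [div_pow, div_le_div_iff₀ (by positivity) hc]
    have e1 : c * ((A ^ 2 + B ^ 2) / 2) ^ 3 = (A ^ 2 + B ^ 2) ^ 3 * c / 8 := by ring
    rw [e1] at hL1
    linarith [hL1, hP1]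
  have hy3 : ((1 : ℝ) / A) ^ 3 ≤ 8 * R / c := by
    rw [div_pow, div_le_div_iff₀ (by positivity) hc]
    have e1 : c * (((0:ℝ) ^ 2 + 1 ^ 2) / 2) ^ 3 = c / 8 := by ring
    rw [e1] at hL2
    have : (1:ℝ) ^ 3 = 1 := one_pow 3
    nlinarith [hL2, hP2]
  have hx := le_max_of_cube (by positivity) hx3
  have hy := le_max_of_cube (by positivity) hy3
  have hEsq : Esq h = (A ^ 2 + B ^ 2) / A + 1 / A := by
    rw [Esq, ← ha', ← hb', ← hc', ← hd']
    have e2 : (A ^ 2 + B ^ 2) / A + 1 / A = (A ^ 2 + B ^ 2 + 1) / A := by ring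
    rw [e2, eq_div_iff hA.ne']
    linear_combination hAC - A * hA'
  rw [hEsq]
  linarith [hx, hy]
lemma orbit_zero (β : Lp ℝ 2 cauchyM) (hβ : (β : ℝ → ℝ) =ᵐ[cauchyM] 0) :
    orbitT' β = {0} := by
  ext γ
  simp only [orbitT', Set.mem_setOf_eq, Set.mem_singleton_iff]
  constructor
  · rintro ⟨g, hg⟩
    have h0 : ∫⁻ ρ, ((‖(β : ℝ → ℝ) ρ‖₊ : ℝ≥0∞)) ∂cauchyM = 0 := by
      have e := lintegral_congr_ae (μ := cauchyM)
        (f := fun ρ => ((‖(β : ℝ → ℝ) ρ‖₊ : ℝ≥0∞))) (g := fun _ => 0)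
        (hβ.mono fun ρ h => by simp [h])
      rw [e, lintegral_zero]
    rw [lintegral_mob g (fun ρ => ((‖(β : ℝ → ℝ) ρ‖₊ : ℝ≥0∞)))] at h0
    have hmeas : Measurable fun σ =>
        ((‖(β : ℝ → ℝ) (mob g σ)‖₊ : ℝ≥0∞)) * ENNReal.ofReal (kappa g σ)⁻¹ := by
      apply Measurable.fun_mul
      · exact (((Lp.stronglyMeasurable β).measurable.comp (measurable_mob g)).nnnorm).coe_nnreal_ennreal
      · exact (((continuous_kappa g).measurable).inv).ennreal_ofReal
    have h1 := (lintegral_eq_zero_iff hmeas).1 h0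
    have hz : ∀ᵐ σ ∂cauchyM, (β : ℝ → ℝ) (mob g σ) = 0 := by
      filter_upwards [h1] with σ hσ
      simp only [Pi.zero_apply] at hσ
      rcases mul_eq_zero.1 hσ with h | h
      · simpa using h
      · exfalso
        rw [ENNReal.ofReal_eq_zero] at h
        exact absurd h (not_le.2 (inv_pos.2 (kappa_pos g σ)))
    have : (γ : ℝ → ℝ) =ᵐ[cauchyM] 0 := by
      filter_upwards [hg, hz] with ρ ha hb
      rw [ha, hb, mul_zero]
      rfl
    exact (Lp.eq_zero_iff_ae_eq_zero).2 this
  · rintro rfl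
    refine ⟨1, ?_⟩
    have h1 : ∀ ρ : ℝ, mob 1 ρ = ρ := by
      intro ρ
      rw [mob]
      simp [Matrix.SpecialLinearGroup.coe_one, Matrix.one_apply]
    filter_upwards [Lp.coeFn_zero ℝ 2 cauchyM, hβ] with ρ ha hb
    rw [ha, h1 ρ, hb]
    simp

lemma entry_sq_le (h : SL2) : ∀ i j, (h.1 i j) ^ 2 ≤ Esq h := by
  simp only [Fin.forall_fin_two, Esq]
  refine ⟨⟨?_, ?_⟩, ?_, ?_⟩ <;>
    nlinarith [sq_nonneg (h.1 0 0), sq_nonneg (h.1 0 1), sq_nonneg (h.1 1 0), sq_nonneg (h.1 1 1)]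

lemma integrable_beta (β : Lp ℝ 2 cauchyM) : Integrable (β : ℝ → ℝ) cauchyM :=
  memLp_one_iff_integrable.1 ((Lp.memLp β).mono_exponent (by norm_num))

lemma inner_toLp_eq (β : Lp ℝ 2 cauchyM) (g : SL2) (v : Lp ℝ 2 cauchyM)
    (hv : (v : ℝ → ℝ) =ᵐ[cauchyM] Tf β g) (φ : ℝ →ᵇ ℝ) :
    (inner ℝ v (BoundedContinuousFunction.toLp (E := ℝ) 2 cauchyM ℝ φ) : ℝ)
      = ∫ σ, kappa g⁻¹ σ * ((β : ℝ → ℝ) σ * φ (mob g⁻¹ σ)) ∂cauchyM := by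
  rw [L2.inner_def, ← integral_Tf_mul β g φ]
  apply integral_congr_ae
  filter_upwards [hv, BoundedContinuousFunction.coeFn_toLp 2 cauchyM ℝ φ] with ρ h1 h2
  rw [RCLike.inner_apply', starRingEnd_apply, star_trivial, h1, h2]

lemma orbit_closed (β : Lp ℝ 2 cauchyM) : IsClosed (orbitT' β) := by
  by_cases hβ : (β : ℝ → ℝ) =ᵐ[cauchyM] 0
  · rw [orbit_zero β hβ]
    exact isClosed_singleton
  apply isClosed_of_closure_subset
  intro γ hγ
  obtain ⟨u, hu, hulim⟩ := mem_closure_iff_seq_limit.1 hγ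
  choose g hg using hu
  obtain ⟨N, hN⟩ := Metric.tendsto_atTop.1 hulim 1 one_pos
  have hR : (0:ℝ) ≤ (‖γ‖ + 1) ^ 2 := by positivity
  have hnorm : ∀ n, N ≤ n →
      (∫⁻ σ, (ENNReal.ofReal (kappa (g n)⁻¹ σ)) ^ 3 * ((‖(β : ℝ → ℝ) σ‖₊ : ℝ≥0∞)) ^ 2 ∂cauchyM)
        ≤ ENNReal.ofReal ((‖γ‖ + 1) ^ 2) := by
    intro n hn
    rw [← lint_sq β (g n)]
    have e1 : ∫⁻ ρ, ((‖Tf β (g n) ρ‖₊ : ℝ≥0∞)) ^ 2 ∂cauchyM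
        = ∫⁻ ρ, ((‖(u n : ℝ → ℝ) ρ‖₊ : ℝ≥0∞)) ^ 2 ∂cauchyM := by
      apply lintegral_congr_ae
      filter_upwards [hg n] with ρ h
      rw [h]
      rfl
    rw [e1]
    have e2 : ∫⁻ ρ, ((‖(u n : ℝ → ℝ) ρ‖₊ : ℝ≥0∞)) ^ 2 ∂cauchyM = (eLpNorm (u n) 2 cauchyM) ^ 2 := by
      rw [eLpNorm_eq_lintegral_rpow_enorm_toReal two_ne_zero ENNReal.ofNat_ne_top,
        ← ENNReal.rpow_natCast _ 2, ← ENNReal.rpow_mul]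
      norm_num
      rfl
    rw [e2]
    have h4 : ‖u n‖ ≤ ‖γ‖ + 1 := by
      have h6 := hN n hn
      have h5 : ‖u n‖ ≤ ‖γ‖ + dist (u n) γ := by
        rw [dist_eq_norm]
        calc ‖u n‖ = ‖γ + (u n - γ)‖ := by rw [add_sub_cancel]
          _ ≤ ‖γ‖ + ‖u n - γ‖ := norm_add_le _ _
      linarith
    have e3 : eLpNorm (u n) 2 cauchyM ≤ ENNReal.ofReal (‖γ‖ + 1) := by
      rw [Lp.norm_def] at h4
      calc eLpNorm (u n) 2 cauchyM
          = ENNReal.ofReal (eLpNorm (u n) 2 cauchyM).toReal := by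
            rw [ENNReal.ofReal_toReal (Lp.eLpNorm_ne_top (u n))]
        _ ≤ ENNReal.ofReal (‖γ‖ + 1) := ENNReal.ofReal_le_ofReal h4
    calc (eLpNorm (u n) 2 cauchyM) ^ 2 ≤ (ENNReal.ofReal (‖γ‖ + 1)) ^ 2 := by gcongr
      _ = ENNReal.ofReal ((‖γ‖ + 1) ^ 2) := by rw [ENNReal.ofReal_pow (by positivity)]
  obtain ⟨M, hM⟩ := entry_bound β hβ ((‖γ‖ + 1) ^ 2) hR
  have hEsqle : ∀ k, Esq ((g (N + k))⁻¹) ≤ M := fun k =>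
    hM ((g (N + k))⁻¹) (hnorm (N + k) (Nat.le_add_right N k))
  let w : ℕ → (Fin 2 → Fin 2 → ℝ) := fun k i j => ((g (N + k))⁻¹ : SL2).1 i j
  have hball : ∀ k, w k ∈ Metric.closedBall (0 : Fin 2 → Fin 2 → ℝ) (Real.sqrt M) := by
    intro k
    rw [mem_closedBall_zero_iff]
    rw [pi_norm_le_iff_of_nonneg (Real.sqrt_nonneg M)]
    intro i
    rw [pi_norm_le_iff_of_nonneg (Real.sqrt_nonneg M)]
    intro j
    rw [Real.norm_eq_abs, ← Real.sqrt_sq_eq_abs]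
    exact Real.sqrt_le_sqrt ((entry_sq_le _ i j).trans (hEsqle k))
  obtain ⟨L, _, φi, hφmono, hφlim⟩ :=
    tendsto_subseq_of_bounded Metric.isBounded_closedBall hball
  have hent : ∀ i j, Tendsto (fun k => w (φi k) i j) atTop (𝓝 (L i j)) := by
    intro i j
    have h1 := hφlim
    rw [tendsto_pi_nhds] at h1
    have h2 := h1 i
    rw [tendsto_pi_nhds] at h2
    exact h2 j
  have hdetL : L 0 0 * L 1 1 - L 0 1 * L 1 0 = 1 := by
    have t1 : Tendsto (fun k => ((g (N + φi k))⁻¹ : SL2).1 0 0 * ((g (N + φi k))⁻¹ : SL2).1 1 1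
        - ((g (N + φi k))⁻¹ : SL2).1 0 1 * ((g (N + φi k))⁻¹ : SL2).1 1 0) atTop
        (𝓝 (L 0 0 * L 1 1 - L 0 1 * L 1 0)) :=
      ((hent 0 0).mul (hent 1 1)).sub ((hent 0 1).mul (hent 1 0))
    have t2 : (fun k => ((g (N + φi k))⁻¹ : SL2).1 0 0 * ((g (N + φi k))⁻¹ : SL2).1 1 1
        - ((g (N + φi k))⁻¹ : SL2).1 0 1 * ((g (N + φi k))⁻¹ : SL2).1 1 0) = fun _ => (1:ℝ) := by
      funext k
      exact det2 _
    rw [t2] at t1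
    exact tendsto_nhds_unique t1 tendsto_const_nhds
  set hinf : SL2 := ⟨L, (Matrix.det_fin_two L).trans hdetL⟩ with hinf'
  set ginf : SL2 := hinf⁻¹ with hginf'
  have hginv : ginf⁻¹ = hinf := inv_inv hinf
  have hMem := memLp_Tf β ginf
  set Γ : Lp ℝ 2 cauchyM := hMem.toLp (Tf β ginf) with hΓ'
  have hΓcoe : (Γ : ℝ → ℝ) =ᵐ[cauchyM] Tf β ginf := hMem.coeFn_toLp
  have hM0 : 0 ≤ M := le_trans (Esq_nonneg _) (hEsqle 0)
  -- the key : equality of inner products against bounded continuous functions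
  have key : ∀ φ : ℝ →ᵇ ℝ,
      (inner ℝ γ (BoundedContinuousFunction.toLp (E := ℝ) 2 cauchyM ℝ φ) : ℝ)
        = inner ℝ Γ (BoundedContinuousFunction.toLp (E := ℝ) 2 cauchyM ℝ φ) := by
    intro φ
    set Φ := BoundedContinuousFunction.toLp (E := ℝ) 2 cauchyM ℝ φ with hΦ'
    have hidx : Tendsto (fun k => N + φi k) atTop atTop :=
      tendsto_atTop_mono (fun k => Nat.le_add_left (φi k) N) hφmono.tendsto_atTop
    have hseq : Tendsto (fun k => u (N + φi k)) atTop (𝓝 γ) := hulim.comp hidx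
    have t1 : Tendsto (fun k => (inner ℝ (u (N + φi k)) Φ : ℝ)) atTop (𝓝 (inner ℝ γ Φ)) :=
      hseq.inner tendsto_const_nhds
    have t1' : Tendsto (fun k => ∫ σ, kappa (g (N + φi k))⁻¹ σ *
        ((β : ℝ → ℝ) σ * φ (mob (g (N + φi k))⁻¹ σ)) ∂cauchyM) atTop (𝓝 (inner ℝ γ Φ)) := by
      apply t1.congr
      intro k
      exact inner_toLp_eq β (g (N + φi k)) (u (N + φi k)) (hg (N + φi k)) φ
    have t2 : Tendsto (fun k => ∫ σ, kappa (g (N + φi k))⁻¹ σ *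
        ((β : ℝ → ℝ) σ * φ (mob (g (N + φi k))⁻¹ σ)) ∂cauchyM) atTop
        (𝓝 (∫ σ, kappa hinf σ * ((β : ℝ → ℝ) σ * φ (mob hinf σ)) ∂cauchyM)) := by
      apply tendsto_integral_of_dominated_convergence
        (bound := fun σ => M * (|(β : ℝ → ℝ) σ| * ‖φ‖))
      · intro k
        apply Measurable.aestronglyMeasurable
        apply ((continuous_kappa _).measurable).fun_mul
        apply ((Lp.stronglyMeasurable β).measurable).fun_mul
        exact (map_continuous φ).measurable.comp (measurable_mob _)
      · exact ((integrable_beta β).abs.mul_const ‖φ‖).const_mul M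
      · intro k
        apply Filter.Eventually.of_forall
        intro σ
        have hk1 : kappa ((g (N + φi k))⁻¹) σ ≤ M := (kappa_le _ σ).trans (hEsqle (φi k))
        have hk0 := kappa_pos ((g (N + φi k))⁻¹) σ
        have hφb : |φ (mob (g (N + φi k))⁻¹ σ)| ≤ ‖φ‖ := by
          rw [← Real.norm_eq_abs]
          exact φ.norm_coe_le_norm _
        rw [Real.norm_eq_abs, abs_mul, abs_mul, abs_of_pos hk0]
        apply mul_le_mul hk1 _ (by positivity) hM0
        exact mul_le_mul_of_nonneg_left hφb (abs_nonneg _)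
      · filter_upwards [ae_s hinf] with σ hσ
        have hnum : Tendsto (fun k => ((g (N + φi k))⁻¹ : SL2).1 0 0 * σ
            + ((g (N + φi k))⁻¹ : SL2).1 1 0) atTop (𝓝 (L 0 0 * σ + L 1 0)) :=
          ((hent 0 0).mul_const σ).add (hent 1 0)
        have hden : Tendsto (fun k => ((g (N + φi k))⁻¹ : SL2).1 0 1 * σ
            + ((g (N + φi k))⁻¹ : SL2).1 1 1) atTop (𝓝 (L 0 1 * σ + L 1 1)) :=
          ((hent 0 1).mul_const σ).add (hent 1 1)
        have hmob : Tendsto (fun k => mob ((g (N + φi k))⁻¹) σ) atTop (𝓝 (mob hinf σ)) := by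
          simp only [mob]
          exact hnum.div hden hσ
        have hkap : Tendsto (fun k => kappa ((g (N + φi k))⁻¹) σ) atTop (𝓝 (kappa hinf σ)) := by
          simp only [kappa]
          exact (((hnum.pow 2).add (hden.pow 2)).div_const _)
        have hφc : Tendsto (fun k => φ (mob ((g (N + φi k))⁻¹) σ)) atTop (𝓝 (φ (mob hinf σ))) :=
          ((map_continuous φ).tendsto _).comp hmob
        exact hkap.mul (tendsto_const_nhds.mul hφc)
    have t3 : (inner ℝ Γ Φ : ℝ) = ∫ σ, kappa hinf σ * ((β : ℝ → ℝ) σ * φ (mob hinf σ)) ∂cauchyM := by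
      have := inner_toLp_eq β ginf Γ hΓcoe φ
      rwa [hginv] at this
    rw [t3]
    exact tendsto_nhds_unique t1' t2
  -- density argument
  have hdense := Lp.boundedContinuousFunction_dense ℝ cauchyM (p := 2) (ENNReal.ofNat_ne_top)
  have heq : Set.EqOn (fun x : Lp ℝ 2 cauchyM => (inner ℝ γ x : ℝ))
      (fun x : Lp ℝ 2 cauchyM => (inner ℝ Γ x : ℝ))
      (Lp.boundedContinuousFunction ℝ 2 cauchyM : Set (Lp ℝ 2 cauchyM)) := by
    intro x hx
    have hx2 : x ∈ (LinearMap.range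
        (BoundedContinuousFunction.toLp (E := ℝ) 2 cauchyM ℝ).toLinearMap).toAddSubgroup := by
      rw [BoundedContinuousFunction.range_toLp]
      exact hx
    obtain ⟨φ, rfl⟩ := hx2
    exact key φ
  have hfun : (fun x : Lp ℝ 2 cauchyM => (inner ℝ γ x : ℝ))
      = fun x : Lp ℝ 2 cauchyM => (inner ℝ Γ x : ℝ) :=
    Continuous.ext_on hdense (continuous_const.inner continuous_id)
      (continuous_const.inner continuous_id) heq
  have hγΓ : γ = Γ := ext_inner_right ℝ fun v => congrFun hfun v
  exact ⟨ginf, by rw [hγΓ]; exact hΓcoe⟩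
end Piard

/-- Piard's first sufficient condition for `B(2,1)`: every orbit of the dual action
`T′` of `SL(2,ℝ)` on `L²(λ)` is open relative to its closure in the norm topology,
i.e. `O_β` is an open subset of the topological subspace `cl(O_β) ⊆ L²(λ)`. -/
theorem orbit_open_in_closure (β : MeasureTheory.Lp ℝ 2 cauchyM) :
    IsOpen {x : closure (orbitT' β) | (x : MeasureTheory.Lp ℝ 2 cauchyM) ∈ orbitT' β} := by
  have hC := Piard.orbit_closed β
  have huniv : {x : closure (orbitT' β) | (x : MeasureTheory.Lp ℝ 2 cauchyM) ∈ orbitT' β}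
      = Set.univ := by
    ext x
    simp only [Set.mem_setOf_eq, Set.mem_univ, iff_true]
    exact hC.closure_subset x.2
  rw [huniv]
  exact isOpen_univ
end
end
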